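/- arXiv:2512.08916 — 4 statements merged into one kernel-verified Lean document; each statement's English description precedes it below -/
import Mathlib

section
/- If Q_∞ is an infinite quiver given as a directed limit of finite quivers Q_1 ↪ Q_2 ↪ ⋯ (each Q_i an induced subquiver of Q_{i+1}), and k is a vertex of Q_∞ with j minimal such that k ∈ Q_j, then the sequence μ_k(Q_j)|_{V(Q_1)}, …, μ_k(Q_j)|_{V(Q_{j-1})}, μ_k(Q_j), μ_k(Q_{j+1}), … again forms a directed system in which each term is an induced subquiver of the next; in particular μ_k(Q_∞) is an infinite quiver. -/
open scoped Classical

noncomputable section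

/-- Matrix mutation of a skew-symmetric integer matrix at vertex `k`. -/
def mutate {I : Type*} (B : I → I → ℤ) (k : I) : I → I → ℤ :=
  fun i j =>
    if i = k ∨ j = k then -B i j
    else B i j + (|B i k| * B k j + B i k * |B k j|) / 2

/-- Apply a sequence of mutations. -/
def mutateSeq {I : Type*} (B : I → I → ℤ) (l : List I) : I → I → ℤ :=
  l.foldl mutate B

/-- The framed quiver: mutable vertices `Sum.inl`, frozen vertices `Sum.inr`,
with an arrow `i → i'` for each vertex `i`. -/
def framed {V : Type*} (B : V → V → ℤ) : V ⊕ V → V ⊕ V → ℤ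
  | Sum.inl i, Sum.inl j => B i j
  | Sum.inl i, Sum.inr j => if i = j then 1 else 0
  | Sum.inr i, Sum.inl j => if i = j then -1 else 0
  | Sum.inr _, Sum.inr _ => 0

/-- `σ` is a reddening sequence for `B`: after mutating the framed quiver along `σ`,
every mutable vertex is red (no arrows to frozen vertices). -/
def IsReddening {V : Type*} (B : V → V → ℤ) (σ : List V) : Prop :=
  ∀ i j : V, mutateSeq (framed B) (σ.map Sum.inl) (Sum.inl i) (Sum.inr j) ≤ 0

/-- The induced subquiver on a vertex set `S` (entries outside `S` are zeroed out). -/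
def restrictQ {I : Type*} (B : I → I → ℤ) (S : Set I) : I → I → ℤ :=
  fun i j => if i ∈ S ∧ j ∈ S then B i j else 0

/-- `σ` is a reddening sequence for the induced subquiver of `B` on the vertex set `S`. -/
def IsReddeningOn {I : Type*} (B : I → I → ℤ) (S : Set I) (σ : List I) : Prop :=
  (∀ k ∈ σ, k ∈ S) ∧
  ∀ i ∈ S, ∀ j ∈ S,
    mutateSeq (framed (restrictQ B S)) (σ.map Sum.inl) (Sum.inl i) (Sum.inr j) ≤ 0

/-- A reddening sequence for the infinite quiver given by the chain of induced
subquivers of `B` on `V 0 ⊆ V 1 ⊆ ⋯`: a coherent family of finite reddening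
sequences, `ρ n` being the restriction of `ρ (n+1)` to `V n` (so that they assemble
into a single infinite or bi-infinite mutation sequence whose restriction to each
`V n` is a reddening sequence for `Q_n`). -/
def InfReddening {I : Type*} (B : I → I → ℤ) (V : ℕ → Set I) : Prop :=
  ∃ ρ : ℕ → List I,
    (∀ n, ρ n = (ρ (n + 1)).filter (fun x => decide (x ∈ V n))) ∧
    ∀ n, IsReddeningOn B (V n) (ρ n)

/-- Mutation of an infinite quiver is an infinite quiver: given a chain of induced
subquivers `Q_n = B|_{V n}` with `V n ⊆ V (n+1)`, each `Q_n` finite, a vertex `k` with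
`j` minimal such that `k ∈ V j`, the sequence
`μ_k(Q_j)|_{V 0}, …, μ_k(Q_j)|_{V (j-1)}, μ_k(Q_j), μ_k(Q_{j+1}), …`
is again a chain in which each term is the induced subquiver of the next. -/
theorem mutate_infinite_quiver {I : Type*} (B : I → I → ℤ)
    (hB : ∀ i j, B j i = -B i j)
    (V : ℕ → Set I) (hmono : ∀ n, V n ⊆ V (n + 1)) (hfin : ∀ n, (V n).Finite)
    (k : I) (j : ℕ) (hk : k ∈ V j) (hjmin : ∀ n, k ∈ V n → j ≤ n) :
    ∀ m : ℕ,
      (if m < j then restrictQ (mutate (restrictQ B (V j)) k) (V m)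
       else mutate (restrictQ B (V m)) k)
      = restrictQ
          (if m + 1 < j then restrictQ (mutate (restrictQ B (V j)) k) (V (m + 1))
           else mutate (restrictQ B (V (m + 1))) k)
          (V m) := by
  have hmem : ∀ n, j ≤ n → k ∈ V n := fun n hn =>
    Nat.le_induction hk (fun n _ ih => hmono n ih) n hn
  intro m
  by_cases h1 : m + 1 < j
  · have h0 : m < j := by omega
    simp only [if_pos h0, if_pos h1]
    funext i i'
    unfold restrictQ
    by_cases h : i ∈ V m ∧ i' ∈ V m
    · simp [h, hmono m h.1, hmono m h.2]
    · simp [h]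
  · by_cases h0 : m < j
    · have hj : j = m + 1 := by omega
      subst hj
      simp only [if_pos h0, if_neg h1]
    · have hle : j ≤ m := by omega
      have hkm : k ∈ V m := hmem m hle
      have hkm1 : k ∈ V (m + 1) := hmem (m + 1) (by omega)
      simp only [if_neg h0, if_neg h1]
      funext i i'
      by_cases h : i ∈ V m ∧ i' ∈ V m
      · show mutate (restrictQ B (V m)) k i i' = restrictQ _ (V m) i i'
        simp [restrictQ, mutate, h.1, h.2, hkm, hkm1, hmono m h.1, hmono m h.2]
      · show mutate (restrictQ B (V m)) k i i' = restrictQ _ (V m) i i'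
        have hR : restrictQ (mutate (restrictQ B (V (m+1))) k) (V m) i i' = 0 := by
          unfold restrictQ; simp [h]
        rw [hR]
        unfold mutate restrictQ
        by_cases hik : i = k
        · subst hik
          have hi' : i' ∉ V m := fun hh => h ⟨hkm, hh⟩
          simp [hi']
        · by_cases hik' : i' = k
          · subst hik'
            have hi : i ∉ V m := fun hh => h ⟨hh, hkm⟩
            simp [hi]
          · simp only [hik, hik', or_self, if_false]
            by_cases him : i ∈ V m
            · have h2 : i' ∉ V m := fun hh => h ⟨him, hh⟩
              simp [him, h2]
            · simp [him]
end
end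

section
/- Every finite out-directed star-of-paths quiver admits a reddening sequence given by mutating level by level outward: for the quiver with a center vertex 0, and m paths of length n emanating outward from 0 (arrows 0 → 1_a, 1_a → 2_a, …, for each branch a), the mutation sequence (0, 1_{a_1}, …, 1_{a_m}, 2_{a_1}, …, 2_{a_m}, …, n_{a_1}, …, n_{a_m}) is a reddening sequence. -/
open scoped Classical

noncomputable section

/-- The star-of-paths quiver `S(m,n)`: a center vertex `none` and `m` outward
directed paths of length `n`, with arrows `0 → 1_a` and `k_a → (k+1)_a`. -/
def starQ (m n : ℕ) : Option (Fin m × Fin n) → Option (Fin m × Fin n) → ℤ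
  | none, none => 0
  | none, some x => if (x.2 : ℕ) = 0 then 1 else 0
  | some x, none => if (x.2 : ℕ) = 0 then -1 else 0
  | some x, some y =>
      if x.1 = y.1 ∧ (y.2 : ℕ) = (x.2 : ℕ) + 1 then 1
      else if x.1 = y.1 ∧ (x.2 : ℕ) = (y.2 : ℕ) + 1 then -1
      else 0

def eSign {V : Type*} (s : V → ℤ) : V ⊕ V → ℤ
  | Sum.inl v => s v
  | Sum.inr _ => 1

def EMat {V : Type*} (B : V → V → ℤ) (s : V → ℤ) : V ⊕ V → V ⊕ V → ℤ :=
  fun i j => eSign s i * eSign s j * framed B i j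

lemma mutate_source {I : Type*} (C : I → I → ℤ) (k : I)
    (h1 : ∀ j, 0 ≤ C k j) (h2 : ∀ i, C i k ≤ 0) :
    mutate C k = fun i j => if i = k ∨ j = k then -C i j else C i j := by
  funext i j
  unfold mutate
  split
  · rfl
  · have ha : |C i k| = -C i k := abs_of_nonpos (h2 i)
    have hb : |C k j| = C k j := abs_of_nonneg (h1 j)
    rw [ha, hb]
    have hz : -C i k * C k j + C i k * C k j = 0 := by ring
    rw [hz]
    simp

lemma framed_skew {V : Type*} (B : V → V → ℤ) (hskew : ∀ v w, B v w = -B w v) :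
    ∀ i j, framed B i j = -framed B j i := by
  rintro (i | i) (j | j) <;> simp only [framed]
  · exact hskew i j
  · rcases eq_or_ne i j with rfl | hne
    · simp
    · simp [hne, hne.symm]
  · rcases eq_or_ne i j with rfl | hne
    · simp
    · simp [hne, hne.symm]
  · ring

lemma red_aux {V : Type*} (B : V → V → ℤ) (hskew : ∀ v w, B v w = -B w v) :
    ∀ (rest : List V) (s : V → ℤ), (∀ v, s v = 1 ∨ s v = -1) →
    rest.Nodup →
    (∀ v ∈ rest, s v = 1) →
    rest.Pairwise (fun k w => 0 ≤ B k w) →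
    (∀ k ∈ rest, ∀ w, s w = -1 → B k w ≤ 0) →
    (∀ k ∈ rest, ∀ w, w ∉ rest → s w = 1 → 0 ≤ B k w) →
    mutateSeq (EMat B s) (rest.map Sum.inl)
      = EMat B (fun v => if v ∈ rest then -1 else s v) := by
  intro rest
  induction rest with
  | nil =>
    intro s _ _ _ _ _ _
    have he : (fun v => if v ∈ ([] : List V) then (-1 : ℤ) else s v) = s := by
      funext v; simp
    rw [he]
    rfl
  | cons k tl IH =>
    intro s hs hnd h1 hP hQ hR
    have hk : k ∈ k :: tl := List.mem_cons_self
    have hsk : s k = 1 := h1 k hk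
    have hBkk : B k k = 0 := by have := hskew k k; omega
    have hEskew : ∀ i j, EMat B s i j = -EMat B s j i := by
      intro i j
      unfold EMat
      rw [framed_skew B hskew i j]
      ring
    have hrow : ∀ j, 0 ≤ EMat B s (Sum.inl k) j := by
      rintro (w | w)
      · show 0 ≤ s k * s w * B k w
        rw [hsk, one_mul]
        rcases hs w with hw | hw
        · rw [hw, one_mul]
          by_cases hwr : w ∈ k :: tl
          · rcases List.mem_cons.mp hwr with rfl | hwtl
            · rw [hBkk]
            · exact (List.pairwise_cons.mp hP).1 w hwtl
          · exact hR k hk w hwr hw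
        · rw [hw]
          have := hQ k hk w hw
          omega
      · show 0 ≤ s k * 1 * (if k = w then (1:ℤ) else 0)
        rw [hsk]
        split <;> omega
    have hcol : ∀ i, EMat B s i (Sum.inl k) ≤ 0 := by
      intro i
      rw [hEskew]
      have := hrow i
      omega
    have hstep : mutate (EMat B s) (Sum.inl k) = EMat B (Function.update s k (-1)) := by
      rw [mutate_source _ _ hrow hcol]
      funext i j
      rcases i with a | a <;> rcases j with b | b
      · simp only [EMat, eSign, framed, Sum.inl.injEq, reduceCtorEq, or_false]
        rcases eq_or_ne a k with ha | ha <;> rcases eq_or_ne b k with hb | hb <;>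
          simp [Function.update, ha, hb, hsk, hBkk] <;> (try split_ifs) <;>
          (first | rfl | ring | omega)
      · simp only [EMat, eSign, framed, Sum.inl.injEq, reduceCtorEq, or_false]
        rcases eq_or_ne a k with ha | ha <;>
          simp [Function.update, ha, hsk] <;> (try split_ifs) <;>
          (first | rfl | ring | omega)
      · simp only [EMat, eSign, framed, Sum.inl.injEq, reduceCtorEq, false_or]
        rcases eq_or_ne b k with hb | hb <;>
          simp [Function.update, hb, hsk] <;> (try split_ifs) <;>
          (first | rfl | ring | omega)
      · simp [EMat, eSign, framed]
    have hndtl : tl.Nodup := (List.nodup_cons.mp hnd).2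
    have hknotl : k ∉ tl := (List.nodup_cons.mp hnd).1
    have key := IH (Function.update s k (-1))
      (by
        intro v
        rcases eq_or_ne v k with rfl | hv
        · right; simp [Function.update]
        · simp only [Function.update, dif_neg hv]; exact hs v)
      hndtl
      (by
        intro v hv
        have hvk : v ≠ k := fun h => hknotl (h ▸ hv)
        simp only [Function.update, dif_neg hvk]
        exact h1 v (List.mem_cons_of_mem _ hv))
      ((List.pairwise_cons.mp hP).2)
      (by
        intro k' hk' w hw
        rcases eq_or_ne w k with rfl | hwk
        · have h0 := (List.pairwise_cons.mp hP).1 k' hk'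
          have := hskew k' w
          omega
        · simp only [Function.update, dif_neg hwk] at hw
          exact hQ k' (List.mem_cons_of_mem _ hk') w hw)
      (by
        intro k' hk' w hwtl hw
        rcases eq_or_ne w k with rfl | hwk
        · simp [Function.update] at hw
        · simp only [Function.update, dif_neg hwk] at hw
          have hwrest : w ∉ k :: tl := by
            intro hc
            rcases List.mem_cons.mp hc with h' | h'
            · exact hwk h'
            · exact hwtl h'
          exact hR k' (List.mem_cons_of_mem _ hk') w hwrest hw)
    have hhead : mutateSeq (EMat B s) ((k :: tl).map Sum.inl)
        = mutateSeq (mutate (EMat B s) (Sum.inl k)) (tl.map Sum.inl) := rfl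
    have hfun : (fun v => if v ∈ tl then (-1 : ℤ) else Function.update s k (-1) v)
        = fun v => if v ∈ k :: tl then (-1 : ℤ) else s v := by
      funext v
      by_cases hv : v ∈ tl
      · rw [if_pos hv, if_pos (List.mem_cons_of_mem _ hv)]
      · rcases eq_or_ne v k with rfl | hvk
        · rw [if_neg hv, if_pos hk]
          simp [Function.update]
        · rw [if_neg hv, if_neg (by simp [hvk, hv]), Function.update_of_ne hvk]
    rw [hhead, hstep, key, hfun]

abbrev starOrd (m : ℕ) {n : ℕ} : Option (Fin m × Fin n) → ℕ
  | none => 0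
  | some x => 1 + (x.2 : ℕ) * m + (x.1 : ℕ)

lemma starQ_skew (m n : ℕ) (v w : Option (Fin m × Fin n)) :
    starQ m n v w = -starQ m n w v := by
  rcases v with _ | ⟨a, i⟩ <;> rcases w with _ | ⟨b, j⟩ <;>
    simp only [starQ, Fin.ext_iff] <;> (try split_ifs) <;> omega

lemma starQ_nonneg_of_ord (m n : ℕ) (v w : Option (Fin m × Fin n))
    (h : starOrd m v < starOrd m w) : 0 ≤ starQ m n v w := by
  rcases v with _ | ⟨a, i⟩ <;> rcases w with _ | ⟨b, j⟩ <;>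
    simp only [starQ, starOrd, Fin.ext_iff] at h ⊢
  · omega
  · split_ifs <;> omega
  · omega
  · split_ifs with h1 h2
    · omega
    · exfalso
      have hmul : (i : ℕ) * m = (j : ℕ) * m + m := by rw [h2.2]; ring
      have hb : (b : ℕ) < m := b.isLt
      omega
    · omega

lemma star_list_pairwise (m n : ℕ) :
    (none :: (List.finRange n).flatMap
        (fun k => (List.finRange m).map fun a => some (a, k))).Pairwise
      (fun v w => starOrd m v < starOrd m w) := by
  rw [List.pairwise_cons]
  constructor
  · intro w hw
    rw [List.mem_flatMap] at hw
    obtain ⟨k, -, hw⟩ := hw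
    rw [List.mem_map] at hw
    obtain ⟨a, -, rfl⟩ := hw
    simp [starOrd]
  · rw [List.pairwise_flatMap]
    constructor
    · intro k _
      rw [List.pairwise_map]
      refine (List.pairwise_lt_finRange m).imp ?_
      intro a b hab
      simp only [starOrd]
      omega
    · refine (List.pairwise_lt_finRange n).imp ?_
      intro k₁ k₂ hk x hx y hy
      rw [List.mem_map] at hx hy
      obtain ⟨a, -, rfl⟩ := hx
      obtain ⟨b, -, rfl⟩ := hy
      
      simp only [starOrd]
      have ha : (a : ℕ) < m := a.isLt
      have hmul : (k₁ : ℕ) * m + m ≤ (k₂ : ℕ) * m := by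
        have hkk : (k₁ : ℕ) + 1 ≤ (k₂ : ℕ) := hk
        have h1 : ((k₁ : ℕ) + 1) * m ≤ (k₂ : ℕ) * m := Nat.mul_le_mul_right m hkk
        have h2 : ((k₁ : ℕ) + 1) * m = (k₁ : ℕ) * m + m := by ring
        omega
      omega

lemma star_list_complete (m n : ℕ) (v : Option (Fin m × Fin n)) :
    v ∈ none :: (List.finRange n).flatMap
        (fun k => (List.finRange m).map fun a => some (a, k)) := by
  rcases v with _ | ⟨a, k⟩
  · exact List.mem_cons_self
  · refine List.mem_cons_of_mem _ ?_
    rw [List.mem_flatMap]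
    exact ⟨k, List.mem_finRange k, List.mem_map.mpr ⟨a, List.mem_finRange a, rfl⟩⟩

/-- Mutating the out-directed star-of-paths quiver level by level outward,
`(0, 1_{a_1}, …, 1_{a_m}, 2_{a_1}, …, 2_{a_m}, …, n_{a_1}, …, n_{a_m})`,
is a reddening sequence. -/
theorem starQ_reddening (m n : ℕ) :
    IsReddening (starQ m n)
      (none :: (List.finRange n).flatMap
        (fun k => (List.finRange m).map fun a => some (a, k))) := by
  intro i j
  set σ := none :: (List.finRange n).flatMap
      (fun k => (List.finRange m).map fun a => some (a, k)) with hσ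
  have hord := star_list_pairwise m n
  have hP : σ.Pairwise (fun v w => 0 ≤ starQ m n v w) :=
    hord.imp (fun h => starQ_nonneg_of_ord m n _ _ h)
  have hnd : σ.Nodup := hord.imp (fun h => by rintro rfl; exact lt_irrefl _ h)
  have hframe : framed (starQ m n) = EMat (starQ m n) (fun _ => 1) := by
    funext i j
    rcases i with a | a <;> rcases j with b | b <;> simp [EMat, eSign]
  rw [hframe, red_aux (starQ m n) (starQ_skew m n) σ (fun _ => 1) (fun _ => Or.inl rfl)
    hnd (fun _ _ => rfl) hP (fun _ _ w hw => absurd hw (by norm_num)) (fun k hk w hw => absurd (star_list_complete m n w) hw)]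
  have hi : i ∈ σ := star_list_complete m n i
  simp only [EMat, eSign, framed, if_pos hi]
  split <;> omega
end
end

section
/- Any finite acyclic quiver admits a reddening sequence: mutating the framed quiver at the vertices in any topological order (sources first) is a reddening sequence; in fact it is a maximal green sequence. -/
open scoped Classical

noncomputable section

section Aux

variable {V : Type*} [DecidableEq V]

/-- Sign function: `-1` on vertices already mutated, `1` otherwise. -/
def modelSgn (l : List V) (i : V) : ℤ := if i ∈ l then -1 else 1

/-- The shape of the framed quiver after mutating along `l` (a prefix of a
topological order). -/
def model (B : V → V → ℤ) (l : List V) : V ⊕ V → V ⊕ V → ℤ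
  | Sum.inl i, Sum.inl j => modelSgn l i * modelSgn l j * B i j
  | Sum.inl i, Sum.inr j => if i = j then modelSgn l i else 0
  | Sum.inr i, Sum.inl j => if i = j then -modelSgn l j else 0
  | Sum.inr _, Sum.inr _ => 0

lemma term_zero (a b : ℤ) (ha : a ≤ 0) (hb : 0 ≤ b) :
    (|a| * b + a * |b|) / 2 = 0 := by
  rw [abs_of_nonpos ha, abs_of_nonneg hb]
  have : -a * b + a * b = 0 := by ring
  rw [this]
  rfl

lemma modelSgn_cases (l : List V) (i : V) :
    modelSgn l i = 1 ∨ modelSgn l i = -1 := by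
  unfold modelSgn; split <;> simp

lemma model_framed (B : V → V → ℤ) : model B ([] : List V) = framed B := by
  funext x y
  cases x <;> cases y <;> simp [model, framed, modelSgn]

lemma modelSgn_append (l : List V) (k : V) (hk : k ∉ l) (i : V) :
    modelSgn (l ++ [k]) i = if i = k then -modelSgn l i else modelSgn l i := by
  unfold modelSgn
  by_cases hik : i = k
  · subst hik
    simp [hk]
  · simp [hik]

lemma mutate_apply {I : Type*} (B : I → I → ℤ) (k i j : I) :
    mutate B k i j = if i = k ∨ j = k then -B i j
      else B i j + (|B i k| * B k j + B i k * |B k j|) / 2 := rfl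

lemma mutate_model (B : V → V → ℤ) (hB : ∀ i j, B j i = -B i j) (l : List V) (k : V)
    (hk : k ∉ l) (hsrc : ∀ i, modelSgn l i * B i k ≤ 0) :
    mutate (model B l) (Sum.inl k) = model B (l ++ [k]) := by
  have hBkk : B k k = 0 := by have := hB k k; omega
  have hsk : modelSgn l k = 1 := by simp [modelSgn, hk]
  have hcol : ∀ x, model B l x (Sum.inl k) ≤ 0 := by
    intro x
    cases x with
    | inl i => show modelSgn l i * modelSgn l k * B i k ≤ 0
               rw [hsk, mul_one]; exact hsrc i
    | inr i => show (if i = k then -modelSgn l k else 0) ≤ 0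
               rw [hsk]; split <;> norm_num
  have hrow : ∀ y, 0 ≤ model B l (Sum.inl k) y := by
    intro y
    cases y with
    | inl j => show 0 ≤ modelSgn l k * modelSgn l j * B k j
               rw [hsk, one_mul, hB j k, mul_neg]
               linarith [hsrc j]
    | inr j => show 0 ≤ (if k = j then modelSgn l k else 0)
               rw [hsk]; split <;> norm_num
  funext x y
  rw [mutate_apply]
  by_cases h : x = Sum.inl k ∨ y = Sum.inl k
  · rw [if_pos h]
    rcases x with i | i <;> rcases y with j | j <;>
      simp only [Sum.inl.injEq, Sum.inr.injEq, reduceCtorEq, or_false, false_or] at h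
    · -- inl inl
      show -(modelSgn l i * modelSgn l j * B i j)
          = modelSgn (l ++ [k]) i * modelSgn (l ++ [k]) j * B i j
      rw [modelSgn_append l k hk i, modelSgn_append l k hk j]
      by_cases hik : i = k <;> by_cases hjk : j = k
      · rw [if_pos hik, if_pos hjk, hik, hjk, hBkk]; ring
      · rw [if_pos hik, if_neg hjk]; ring
      · rw [if_neg hik, if_pos hjk]; ring
      · exact absurd h (by simp [hik, hjk])
    · -- inl inr, h : i = k
      show -(if i = j then modelSgn l i else 0)
          = (if i = j then modelSgn (l ++ [k]) i else 0)
      rw [modelSgn_append l k hk i, if_pos h, h, hsk]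
      split <;> norm_num
    · -- inr inl, h : j = k
      show -(if i = j then -modelSgn l j else 0)
          = (if i = j then -modelSgn (l ++ [k]) j else 0)
      rw [modelSgn_append l k hk j, if_pos h, h, hsk]
      split <;> norm_num
  · rw [if_neg h]
    push_neg at h
    obtain ⟨hx, hy⟩ := h
    rw [term_zero _ _ (hcol x) (hrow y), add_zero]
    rcases x with i | i <;> rcases y with j | j
    · have hik : i ≠ k := fun hh => hx (by rw [hh])
      have hjk : j ≠ k := fun hh => hy (by rw [hh])
      show modelSgn l i * modelSgn l j * B i j
          = modelSgn (l ++ [k]) i * modelSgn (l ++ [k]) j * B i j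
      rw [modelSgn_append l k hk i, modelSgn_append l k hk j, if_neg hik, if_neg hjk]
    · have hik : i ≠ k := fun hh => hx (by rw [hh])
      show (if i = j then modelSgn l i else 0) = (if i = j then modelSgn (l ++ [k]) i else 0)
      rw [modelSgn_append l k hk i, if_neg hik]
    · have hjk : j ≠ k := fun hh => hy (by rw [hh])
      show (if i = j then -modelSgn l j else 0) = (if i = j then -modelSgn (l ++ [k]) j else 0)
      rw [modelSgn_append l k hk j, if_neg hjk]
    · rfl

lemma mutateSeq_append_singleton {I : Type*} (B : I → I → ℤ) (l : List I) (k : I) :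
    mutateSeq B (l ++ [k]) = mutate (mutateSeq B l) k := by
  simp [mutateSeq, List.foldl_append]

end Aux

/-- Every finite acyclic quiver admits a reddening sequence: mutating along any
topological order `σ` (each vertex listed before all of its out-neighbors) is a
reddening sequence, and in fact a maximal green sequence (every mutation occurs
at a green vertex). -/
theorem acyclic_maximal_green {V : Type*} [Fintype V] [DecidableEq V]
    (B : V → V → ℤ) (hB : ∀ i j, B j i = -B i j)
    (σ : List V) (hnd : σ.Nodup) (hall : ∀ v : V, v ∈ σ)
    (htopo : ∀ i j : V, 0 < B i j → σ.idxOf i < σ.idxOf j) :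
    IsReddening B σ ∧
    ∀ (t : ℕ) (ht : t < σ.length) (j : V),
      mutateSeq (framed B) ((σ.take t).map Sum.inl)
        (Sum.inr j) (Sum.inl (σ.get ⟨t, ht⟩)) ≤ 0 := by
  -- membership in a prefix is equivalent to having small index
  have hmem_take : ∀ (t : ℕ) (i : V), i ∈ σ.take t ↔ σ.idxOf i < t := by
    intro t i
    constructor
    · intro h
      obtain ⟨m, hm, hmi⟩ := List.getElem_of_mem h
      have hm' : m < t ∧ m < σ.length := by
        simpa [List.length_take, lt_min_iff] using hm
      rw [List.getElem_take] at hmi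
      have := List.Nodup.idxOf_getElem hnd m hm'.2
      rw [hmi] at this
      rw [this]
      exact hm'.1
    · intro h
      have hil : σ.idxOf i < σ.length := List.idxOf_lt_length_iff.2 (hall i)
      have hi : σ[σ.idxOf i] = i := List.getElem_idxOf hil
      have : (σ.take t)[σ.idxOf i]'(by simp [hil, h]) = i := by
        rw [List.getElem_take]; exact hi
      rw [← this]
      exact List.getElem_mem _
  -- the key invariant
  have key : ∀ t, t ≤ σ.length →
      mutateSeq (framed B) ((σ.take t).map Sum.inl) = model B (σ.take t) := by
    intro t
    induction t with
    | zero => intro _; simp [mutateSeq, model_framed]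
    | succ t ih =>
      intro ht
      have ht' : t < σ.length := ht
      have htake : σ.take (t + 1) = σ.take t ++ [σ[t]] := by
        rw [List.take_succ]
        simp [List.getElem?_eq_getElem ht']
      have hidx : σ.idxOf σ[t] = t := List.Nodup.idxOf_getElem hnd t ht'
      have hknot : σ[t] ∉ σ.take t := by
        rw [hmem_take, hidx]; omega
      have hsrc : ∀ i, modelSgn (σ.take t) i * B i σ[t] ≤ 0 := by
        intro i
        unfold modelSgn
        by_cases hi : i ∈ σ.take t
        · rw [if_pos hi]
          have : 0 ≤ B i σ[t] := by
            by_contra hlt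
            push_neg at hlt
            have hpos : 0 < B σ[t] i := by have := hB i σ[t]; omega
            have := htopo _ _ hpos
            rw [hidx] at this
            have := (hmem_take t i).1 hi
            omega
          omega
        · rw [if_neg hi]
          have : B i σ[t] ≤ 0 := by
            by_contra hlt
            push_neg at hlt
            have := htopo _ _ hlt
            rw [hidx] at this
            exact hi ((hmem_take t i).2 this)
          omega
      rw [htake, List.map_append, List.map_singleton, mutateSeq_append_singleton,
        ih (le_of_lt ht'), mutate_model B hB _ _ hknot hsrc]
  have hfin : σ.take σ.length = σ := List.take_length
  constructor
  · intro i j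
    have := key σ.length le_rfl
    rw [hfin] at this
    rw [this]
    show (if i = j then modelSgn σ i else 0) ≤ 0
    have : modelSgn σ i = -1 := by simp [modelSgn, hall i]
    rw [this]
    split <;> norm_num
  · intro t ht j
    rw [key t (le_of_lt ht)]
    show (if j = σ.get ⟨t, ht⟩ then -modelSgn (σ.take t) (σ.get ⟨t, ht⟩) else 0) ≤ 0
    have hidx : σ.idxOf (σ.get ⟨t, ht⟩) = t := by
      simpa using List.Nodup.idxOf_getElem hnd t ht
    have : modelSgn (σ.take t) (σ.get ⟨t, ht⟩) = 1 := by
      unfold modelSgn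
      rw [if_neg]
      rw [hmem_take, hidx]
      omega
    rw [this]
    split <;> norm_num
end
end

section
/- Define the infinite triangle-tower quiver T_∞ as the limit of T_n, where T_1 is a directed 3-cycle on {a_1,b_1,c_1} and T_{n+1} adds a directed 3-cycle on {a_{n+1},b_{n+1},c_{n+1}} together with connecting arrows all directed between consecutive layers in a single direction (alternating: layer 1 → layer 2 incoming, layer 3 → layer 2, layer 3 → layer 4, as in the paper's figure). Then T_∞ admits an infinite reddening sequence. -/
open scoped Classical

noncomputable section

/-- The infinite triangle-tower quiver `T_∞`: layer `n` is a directed 3-cycle on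
`{(n,0), (n,1), (n,2)}`, and all connecting arrows between consecutive layers
point in a single direction per pair of layers, alternating
(layer 0 → layer 1, layer 2 → layer 1, layer 2 → layer 3, …). -/
def towerQ : ℕ × Fin 3 → ℕ × Fin 3 → ℤ := fun x y =>
  if x.1 = y.1 ∧ y.2 = x.2 + 1 then 1
  else if x.1 = y.1 ∧ x.2 = y.2 + 1 then -1
  else if y.1 = x.1 + 1 ∧ x.2 = y.2 then (if x.1 % 2 = 0 then 1 else -1)
  else if x.1 = y.1 + 1 ∧ x.2 = y.2 then (if y.1 % 2 = 0 then -1 else 1)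
  else 0

-- ===== auxiliary general lemmas =====

def mutateC {I : Type*} [DecidableEq I] (B : I → I → ℤ) (k : I) : I → I → ℤ :=
  fun i j =>
    if i = k ∨ j = k then -B i j
    else B i j + (|B i k| * B k j + B i k * |B k j|) / 2

def mutateSeqC {I : Type*} [DecidableEq I] (B : I → I → ℤ) (l : List I) : I → I → ℤ :=
  l.foldl mutateC B

theorem mutate_eq_mutateC {I : Type*} [DecidableEq I] (B : I → I → ℤ) (k : I) :
    mutate B k = mutateC B k := by
  funext i j
  by_cases h : i = k ∨ j = k <;> simp [mutate, mutateC, h]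

theorem mutateSeq_eq_mutateSeqC {I : Type*} [DecidableEq I] (B : I → I → ℤ) (l : List I) :
    mutateSeq B l = mutateSeqC B l := by
  induction l generalizing B with
  | nil => rfl
  | cons k l ih =>
    show List.foldl mutate (mutate B k) l = List.foldl mutateC (mutateC B k) l
    rw [mutate_eq_mutateC]; exact ih _

theorem mutateSeq_append {I : Type*} (B : I → I → ℤ) (l₁ l₂ : List I) :
    mutateSeq B (l₁ ++ l₂) = mutateSeq (mutateSeq B l₁) l₂ :=
  List.foldl_append

theorem mutate_pullback {I J : Type*} (φ : J → I) (hφ : Function.Injective φ)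
    (B : I → I → ℤ) (k : J) :
    (fun a b => mutate B (φ k) (φ a) (φ b)) = mutate (fun a b => B (φ a) (φ b)) k := by
  funext a b
  by_cases h : a = k ∨ b = k
  · have h' : φ a = φ k ∨ φ b = φ k := by rcases h with h|h <;> [left; right] <;> rw [h]
    simp [mutate, h, h']
  · have h' : ¬(φ a = φ k ∨ φ b = φ k) := by
      rintro (h'|h')
      · exact h (Or.inl (hφ h'))
      · exact h (Or.inr (hφ h'))
    simp [mutate, h, h']

theorem mutateSeq_pullback {I J : Type*} (φ : J → I) (hφ : Function.Injective φ)
    (l : List J) : ∀ (B : I → I → ℤ) (x y : J),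
    mutateSeq B (l.map φ) (φ x) (φ y) = mutateSeq (fun a b => B (φ a) (φ b)) l x y := by
  induction l with
  | nil => intro B x y; rfl
  | cons k l ih =>
    intro B x y
    show mutateSeq (mutate B (φ k)) (l.map φ) (φ x) (φ y) = mutateSeq (mutate _ k) l x y
    rw [ih (mutate B (φ k)) x y, mutate_pullback φ hφ]

theorem mutate_window {I : Type*} (W : Set I) (B : I → I → ℤ) (k : I) (hk : k ∈ W)
    (hrow : ∀ z, z ∉ W → B k z = 0 ∧ B z k = 0) :
    ∀ x y, (x ∉ W ∨ y ∉ W) → mutate B k x y = B x y := by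
  intro x y hxy
  by_cases h : x = k ∨ y = k
  · have hBxy : B x y = 0 := by
      rcases h with rfl|rfl
      · rcases hxy with hx|hy
        · exact absurd hk hx
        · exact (hrow y hy).1
      · rcases hxy with hx|hy
        · exact (hrow x hx).2
        · exact absurd hk hy
    simp [mutate, h, hBxy]
  · have hz : B x k = 0 ∨ B k y = 0 := by
      rcases hxy with hx|hy
      · exact Or.inl (hrow x hx).2
      · exact Or.inr (hrow y hy).1
    rcases hz with hz|hz <;> simp [mutate, h, hz]

theorem mutate_window_row {I : Type*} (W : Set I) (B : I → I → ℤ) (k k' : I)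
    (hk : k ∈ W) (hk' : k' ∈ W)
    (hrow : ∀ z, z ∉ W → B k z = 0 ∧ B z k = 0)
    (hrow' : ∀ z, z ∉ W → B k' z = 0 ∧ B z k' = 0) :
    ∀ z, z ∉ W → mutate B k k' z = 0 ∧ mutate B k z k' = 0 := by
  intro z hz
  constructor
  · rw [mutate_window W B k hk hrow k' z (Or.inr hz)]; exact (hrow' z hz).1
  · rw [mutate_window W B k hk hrow z k' (Or.inl hz)]; exact (hrow' z hz).2

theorem mutateSeq_window {I : Type*} (W : Set I) :
    ∀ (σ : List I) (B : I → I → ℤ),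
    (∀ k ∈ σ, k ∈ W ∧ ∀ z, z ∉ W → B k z = 0 ∧ B z k = 0) →
    ∀ x y, (x ∉ W ∨ y ∉ W) → mutateSeq B σ x y = B x y := by
  intro σ
  induction σ with
  | nil => intro B _ x y _; rfl
  | cons k l ih =>
    intro B h x y hxy
    obtain ⟨hk, hrow⟩ := h k List.mem_cons_self
    have step : ∀ k' ∈ l, k' ∈ W ∧ ∀ z, z ∉ W → mutate B k k' z = 0 ∧ mutate B k z k' = 0 := by
      intro k' hk'
      obtain ⟨hk'W, hrow'⟩ := h k' (List.mem_cons_of_mem _ hk')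
      exact ⟨hk'W, mutate_window_row W B k k' hk hk'W hrow hrow'⟩
    show mutateSeq (mutate B k) l x y = B x y
    rw [ih (mutate B k) step x y hxy, mutate_window W B k hk hrow x y hxy]

-- ===== tower-specific closed forms =====

abbrev I3 := ℕ × Fin 3
abbrev FI := I3 ⊕ I3
abbrev JW := Fin 4 × Fin 3

def cyc3 (s t : Fin 3) : ℤ := if t = s + 1 then 1 else if s = t + 1 then -1 else 0
def id3 (s t : Fin 3) : ℤ := if s = t then 1 else 0
def rf3 (s t : Fin 3) : ℤ := if (s : ℕ) + (t : ℕ) = 2 then 1 else 0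

def cpl (e o l : ℕ) (s t : Fin 3) : ℤ :=
  if l + 1 ≤ 2*o then (if l % 2 = 0 then id3 s t else -id3 s t)
  else if (if l % 2 = 0 then l else l+1) < 2*e then (if l % 2 = 0 then -rf3 s t else rf3 s t)
  else (if l % 2 = 0 then id3 s t else -id3 s t)

def St (n e o : ℕ) : FI → FI → ℤ
  | .inl (l,s), .inl (k,t) =>
    if l ≤ n ∧ k ≤ n then
      if l = k then (if l % 2 = 0 ∧ l < 2*e ∨ l < 2*o then -cyc3 s t else cyc3 s t)
      else if k = l + 1 then cpl e o l s t
      else if l = k + 1 then -cpl e o k t s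
      else 0
    else 0
  | .inl (l,s), .inr (k,t) =>
    if l = k then (if l ≤ n ∧ (l % 2 = 0 ∧ l < 2*e ∨ l < 2*o) then -rf3 s t else id3 s t) else 0
  | .inr (l,s), .inl (k,t) =>
    if l = k then -(if k ≤ n ∧ (k % 2 = 0 ∧ k < 2*e ∨ k < 2*o) then -rf3 t s else id3 t s) else 0
  | .inr _, .inr _ => 0

def BE (lo hi : Bool) : JW → JW → ℤ := fun a b =>
  match a, b with
  | (0,s),(0,t) => if lo then cyc3 s t else 0
  | (0,s),(1,t) => if lo then -id3 s t else 0
  | (1,s),(0,t) => if lo then - -id3 t s else 0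
  | (1,s),(1,t) => cyc3 s t
  | (1,s),(2,t) => if hi then id3 s t else 0
  | (2,s),(1,t) => if hi then -id3 t s else 0
  | (2,s),(2,t) => if hi then cyc3 s t else 0
  | (1,s),(3,t) => id3 s t
  | (3,s),(1,t) => -id3 t s
  | _,_ => 0

def TE (lo hi : Bool) : JW → JW → ℤ := fun a b =>
  match a, b with
  | (0,s),(0,t) => if lo then cyc3 s t else 0
  | (0,s),(1,t) => if lo then rf3 s t else 0
  | (1,s),(0,t) => if lo then -rf3 t s else 0
  | (1,s),(1,t) => -cyc3 s t
  | (1,s),(2,t) => if hi then -rf3 s t else 0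
  | (2,s),(1,t) => if hi then - -rf3 t s else 0
  | (2,s),(2,t) => if hi then cyc3 s t else 0
  | (1,s),(3,t) => -rf3 s t
  | (3,s),(1,t) => - -rf3 t s
  | _,_ => 0

def BO (hi : Bool) : JW → JW → ℤ := fun a b =>
  match a, b with
  | (0,s),(0,t) => -cyc3 s t
  | (0,s),(1,t) => -rf3 s t
  | (1,s),(0,t) => - -rf3 t s
  | (1,s),(1,t) => cyc3 s t
  | (1,s),(2,t) => if hi then rf3 s t else 0
  | (2,s),(1,t) => if hi then -rf3 t s else 0
  | (2,s),(2,t) => if hi then -cyc3 s t else 0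
  | (1,s),(3,t) => id3 s t
  | (3,s),(1,t) => -id3 t s
  | _,_ => 0

def TO (hi : Bool) : JW → JW → ℤ := fun a b =>
  match a, b with
  | (0,s),(0,t) => -cyc3 s t
  | (0,s),(1,t) => id3 s t
  | (1,s),(0,t) => -id3 t s
  | (1,s),(1,t) => -cyc3 s t
  | (1,s),(2,t) => if hi then -id3 s t else 0
  | (2,s),(1,t) => if hi then - -id3 t s else 0
  | (2,s),(2,t) => if hi then -cyc3 s t else 0
  | (1,s),(3,t) => -rf3 s t
  | (3,s),(1,t) => - -rf3 t s
  | _,_ => 0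

def lw : List JW := [(1,0),(1,1),(1,2),(1,0)]

set_option maxRecDepth 100000 in
theorem evenCore : ∀ (lo hi : Bool) (a b : JW), mutateSeqC (BE lo hi) lw a b = TE lo hi a b := by
  decide

set_option maxRecDepth 100000 in
theorem oddCore : ∀ (hi : Bool) (a b : JW), mutateSeqC (BO hi) lw a b = TO hi a b := by
  decide

def sL (k : ℕ) : List I3 := [(k,0),(k,1),(k,2),(k,0)]

def phiE (n m : ℕ) : JW → FI
  | (0, t) => .inl (if m = 0 then n+5 else 2*m-1, t)
  | (1, t) => .inl (2*m, t)
  | (2, t) => .inl (2*m+1, t)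
  | (3, t) => .inr (2*m, t)

def phiO (m : ℕ) : JW → FI
  | (0, t) => .inl (2*m, t)
  | (1, t) => .inl (2*m+1, t)
  | (2, t) => .inl (2*m+2, t)
  | (3, t) => .inr (2*m+1, t)

theorem injE (n m : ℕ) (h : 2*m ≤ n) : Function.Injective (phiE n m) := by
  rintro ⟨q, s⟩ ⟨r, t⟩ hab
  fin_cases q <;> fin_cases r <;>
    simp only [phiE, Sum.inl.injEq, Sum.inr.injEq, Prod.mk.injEq, reduceCtorEq] at hab <;>
    first
      | (obtain ⟨h1, h2⟩ := hab; subst h2; rfl)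
      | (exfalso; have h2 := hab.1; split_ifs at h2 <;> omega)
      | (exfalso; have h2 := hab.1; omega)
      | exact hab.elim

theorem injO (m : ℕ) : Function.Injective (phiO m) := by
  rintro ⟨q, s⟩ ⟨r, t⟩ hab
  fin_cases q <;> fin_cases r <;>
    simp only [phiO, Sum.inl.injEq, Sum.inr.injEq, Prod.mk.injEq, reduceCtorEq] at hab <;>
    first
      | (obtain ⟨h1, h2⟩ := hab; subst h2; rfl)
      | (exfalso; have h2 := hab.1; omega)
      | exact hab.elim

-- ===== evaluation lemmas for St =====

theorem St_rr (n e o : ℕ) (a b : I3) : St n e o (.inr a) (.inr b) = 0 := rfl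

theorem St_ll_far (n e o l k : ℕ) (s t : Fin 3)
    (h : ¬(l ≤ n ∧ k ≤ n) ∨ (l ≠ k ∧ k ≠ l + 1 ∧ l ≠ k + 1)) :
    St n e o (.inl (l,s)) (.inl (k,t)) = 0 := by
  simp only [St]; split_ifs <;> first | rfl | omega

theorem St_ll_diag_done (n e o l : ℕ) (s t : Fin 3) (h1 : l ≤ n)
    (h2 : l % 2 = 0 ∧ l < 2*e ∨ l < 2*o) :
    St n e o (.inl (l,s)) (.inl (l,t)) = -cyc3 s t := by
  simp only [St]; split_ifs <;> first | rfl | omega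

theorem St_ll_diag_raw (n e o l : ℕ) (s t : Fin 3) (h1 : l ≤ n)
    (h2 : ¬(l % 2 = 0 ∧ l < 2*e ∨ l < 2*o)) :
    St n e o (.inl (l,s)) (.inl (l,t)) = cyc3 s t := by
  simp only [St]; split_ifs <;> first | rfl | omega

theorem St_ll_up (n e o l k : ℕ) (s t : Fin 3) (h1 : k ≤ n) (h2 : k = l + 1) :
    St n e o (.inl (l,s)) (.inl (k,t)) = cpl e o l s t := by
  simp only [St]; split_ifs <;> first | rfl | omega

theorem St_ll_dn (n e o l k : ℕ) (s t : Fin 3) (h1 : l ≤ n) (h2 : l = k + 1) :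
    St n e o (.inl (l,s)) (.inl (k,t)) = -cpl e o k t s := by
  simp only [St]; split_ifs <;> first | rfl | omega

theorem St_lr_diag_done (n e o l : ℕ) (s t : Fin 3)
    (h2 : l ≤ n ∧ (l % 2 = 0 ∧ l < 2*e ∨ l < 2*o)) :
    St n e o (.inl (l,s)) (.inr (l,t)) = -rf3 s t := by
  simp only [St]; split_ifs <;> first | rfl | omega

theorem St_lr_diag_raw (n e o l : ℕ) (s t : Fin 3)
    (h2 : ¬(l ≤ n ∧ (l % 2 = 0 ∧ l < 2*e ∨ l < 2*o))) :
    St n e o (.inl (l,s)) (.inr (l,t)) = id3 s t := by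
  simp only [St]; split_ifs <;> first | rfl | omega

theorem St_lr_off (n e o l k : ℕ) (s t : Fin 3) (h : l ≠ k) :
    St n e o (.inl (l,s)) (.inr (k,t)) = 0 := by
  simp only [St]; split_ifs <;> first | rfl | omega

theorem St_rl_diag_done (n e o k : ℕ) (s t : Fin 3)
    (h2 : k ≤ n ∧ (k % 2 = 0 ∧ k < 2*e ∨ k < 2*o)) :
    St n e o (.inr (k,s)) (.inl (k,t)) = - -rf3 t s := by
  simp only [St]; split_ifs <;> first | rfl | omega

theorem St_rl_diag_raw (n e o k : ℕ) (s t : Fin 3)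
    (h2 : ¬(k ≤ n ∧ (k % 2 = 0 ∧ k < 2*e ∨ k < 2*o))) :
    St n e o (.inr (k,s)) (.inl (k,t)) = -id3 t s := by
  simp only [St]; split_ifs <;> first | rfl | omega

theorem St_rl_off (n e o l k : ℕ) (s t : Fin 3) (h : l ≠ k) :
    St n e o (.inr (l,s)) (.inl (k,t)) = 0 := by
  simp only [St]; split_ifs <;> first | rfl | omega

theorem cpl_1e (e o l : ℕ) (s t : Fin 3) (h1 : l + 1 ≤ 2*o) (h2 : l % 2 = 0) :
    cpl e o l s t = id3 s t := by
  simp only [cpl]; split_ifs <;> first | rfl | omega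
theorem cpl_1o (e o l : ℕ) (s t : Fin 3) (h1 : l + 1 ≤ 2*o) (h2 : l % 2 = 1) :
    cpl e o l s t = -id3 s t := by
  simp only [cpl]; split_ifs <;> first | rfl | omega
theorem cpl_2e (e o l : ℕ) (s t : Fin 3) (h1 : ¬(l + 1 ≤ 2*o)) (h2 : l < 2*e) (h3 : l % 2 = 0) :
    cpl e o l s t = -rf3 s t := by
  simp only [cpl]; split_ifs <;> first | rfl | omega
theorem cpl_2o (e o l : ℕ) (s t : Fin 3) (h1 : ¬(l + 1 ≤ 2*o)) (h2 : l + 1 < 2*e) (h3 : l % 2 = 1) :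
    cpl e o l s t = rf3 s t := by
  simp only [cpl]; split_ifs <;> first | rfl | omega
theorem cpl_3e (e o l : ℕ) (s t : Fin 3) (h1 : ¬(l + 1 ≤ 2*o)) (h2 : ¬(l < 2*e)) (h3 : l % 2 = 0) :
    cpl e o l s t = id3 s t := by
  simp only [cpl]; split_ifs <;> first | rfl | omega
theorem cpl_3o (e o l : ℕ) (s t : Fin 3) (h1 : ¬(l + 1 ≤ 2*o)) (h2 : ¬(l + 1 < 2*e)) (h3 : l % 2 = 1) :
    cpl e o l s t = -id3 s t := by
  simp only [cpl]; split_ifs <;> first | rfl | omega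

theorem cpl_congrE (e o m l : ℕ) (h : ¬(l = 2*m - 1 ∨ l = 2*m)) (ho : o = 0) :
    cpl (m+1) o l = cpl m o l := by
  funext s t
  simp only [cpl]; split_ifs <;> first | rfl | omega

theorem cpl_congrO (e m l : ℕ) (h : ¬(l = 2*m ∨ l = 2*m + 1)) :
    cpl e (m+1) l = cpl e m l := by
  funext s t
  simp only [cpl]; split_ifs <;> first | rfl | omega
theorem pullE_tt (n m : ℕ) (h : 2*m ≤ n) (hm : 0 < m) (hn : 2*m+1 ≤ n) :
    ∀ a b : JW, St n m 0 (phiE n m a) (phiE n m b) = (BE true true) a b := by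
  intro a b
  obtain ⟨q, s⟩ := a; obtain ⟨r, t⟩ := b
  fin_cases q <;> fin_cases r <;> simp only [phiE, if_neg (show ¬m = 0 by omega)]
  · rw [St_ll_diag_raw n m 0 (2*m-1) s t (by omega) (by omega)] <;> simp [BE]
  · rw [St_ll_up n m 0 (2*m-1) (2*m) s t (by omega) (by omega), cpl_3o m 0 (2*m-1) s t (by omega) (by omega) (by omega)] <;> simp [BE]
  · rw [St_ll_far n m 0 (2*m-1) (2*m+1) s t (by omega)] <;> simp [BE]
  · rw [St_lr_off n m 0 (2*m-1) (2*m) s t (by omega)] <;> simp [BE]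
  · rw [St_ll_dn n m 0 (2*m) (2*m-1) s t (by omega) (by omega), cpl_3o m 0 (2*m-1) t s (by omega) (by omega) (by omega)] <;> simp [BE]
  · rw [St_ll_diag_raw n m 0 (2*m) s t (by omega) (by omega)] <;> simp [BE]
  · rw [St_ll_up n m 0 (2*m) (2*m+1) s t (by omega) (by omega), cpl_3e m 0 (2*m) s t (by omega) (by omega) (by omega)] <;> simp [BE]
  · rw [St_lr_diag_raw n m 0 (2*m) s t (by omega)] <;> simp [BE]
  · rw [St_ll_far n m 0 (2*m+1) (2*m-1) s t (by omega)] <;> simp [BE]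
  · rw [St_ll_dn n m 0 (2*m+1) (2*m) s t (by omega) (by omega), cpl_3e m 0 (2*m) t s (by omega) (by omega) (by omega)] <;> simp [BE]
  · rw [St_ll_diag_raw n m 0 (2*m+1) s t (by omega) (by omega)] <;> simp [BE]
  · rw [St_lr_off n m 0 (2*m+1) (2*m) s t (by omega)] <;> simp [BE]
  · rw [St_rl_off n m 0 (2*m) (2*m-1) s t (by omega)] <;> simp [BE]
  · rw [St_rl_diag_raw n m 0 (2*m) s t (by omega)] <;> simp [BE]
  · rw [St_rl_off n m 0 (2*m) (2*m+1) s t (by omega)] <;> simp [BE]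
  · rw [St_rr] <;> simp [BE]

theorem pullTE_tt (n m : ℕ) (h : 2*m ≤ n) (hm : 0 < m) (hn : 2*m+1 ≤ n) :
    ∀ a b : JW, St n (m+1) 0 (phiE n m a) (phiE n m b) = (TE true true) a b := by
  intro a b
  obtain ⟨q, s⟩ := a; obtain ⟨r, t⟩ := b
  fin_cases q <;> fin_cases r <;> simp only [phiE, if_neg (show ¬m = 0 by omega)]
  · rw [St_ll_diag_raw n (m+1) 0 (2*m-1) s t (by omega) (by omega)] <;> simp [TE]
  · rw [St_ll_up n (m+1) 0 (2*m-1) (2*m) s t (by omega) (by omega), cpl_2o (m+1) 0 (2*m-1) s t (by omega) (by omega) (by omega)] <;> simp [TE]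
  · rw [St_ll_far n (m+1) 0 (2*m-1) (2*m+1) s t (by omega)] <;> simp [TE]
  · rw [St_lr_off n (m+1) 0 (2*m-1) (2*m) s t (by omega)] <;> simp [TE]
  · rw [St_ll_dn n (m+1) 0 (2*m) (2*m-1) s t (by omega) (by omega), cpl_2o (m+1) 0 (2*m-1) t s (by omega) (by omega) (by omega)] <;> simp [TE]
  · rw [St_ll_diag_done n (m+1) 0 (2*m) s t (by omega) (by omega)] <;> simp [TE]
  · rw [St_ll_up n (m+1) 0 (2*m) (2*m+1) s t (by omega) (by omega), cpl_2e (m+1) 0 (2*m) s t (by omega) (by omega) (by omega)] <;> simp [TE]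
  · rw [St_lr_diag_done n (m+1) 0 (2*m) s t (by omega)] <;> simp [TE]
  · rw [St_ll_far n (m+1) 0 (2*m+1) (2*m-1) s t (by omega)] <;> simp [TE]
  · rw [St_ll_dn n (m+1) 0 (2*m+1) (2*m) s t (by omega) (by omega), cpl_2e (m+1) 0 (2*m) t s (by omega) (by omega) (by omega)] <;> simp [TE]
  · rw [St_ll_diag_raw n (m+1) 0 (2*m+1) s t (by omega) (by omega)] <;> simp [TE]
  · rw [St_lr_off n (m+1) 0 (2*m+1) (2*m) s t (by omega)] <;> simp [TE]
  · rw [St_rl_off n (m+1) 0 (2*m) (2*m-1) s t (by omega)] <;> simp [TE]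
  · rw [St_rl_diag_done n (m+1) 0 (2*m) s t (by omega)] <;> simp [TE]
  · rw [St_rl_off n (m+1) 0 (2*m) (2*m+1) s t (by omega)] <;> simp [TE]
  · rw [St_rr] <;> simp [TE]

theorem pullE_tf (n m : ℕ) (h : 2*m ≤ n) (hm : 0 < m) (hn : ¬(2*m+1 ≤ n)) :
    ∀ a b : JW, St n m 0 (phiE n m a) (phiE n m b) = (BE true false) a b := by
  intro a b
  obtain ⟨q, s⟩ := a; obtain ⟨r, t⟩ := b
  fin_cases q <;> fin_cases r <;> simp only [phiE, if_neg (show ¬m = 0 by omega)]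
  · rw [St_ll_diag_raw n m 0 (2*m-1) s t (by omega) (by omega)] <;> simp [BE]
  · rw [St_ll_up n m 0 (2*m-1) (2*m) s t (by omega) (by omega), cpl_3o m 0 (2*m-1) s t (by omega) (by omega) (by omega)] <;> simp [BE]
  · rw [St_ll_far n m 0 (2*m-1) (2*m+1) s t (by omega)] <;> simp [BE]
  · rw [St_lr_off n m 0 (2*m-1) (2*m) s t (by omega)] <;> simp [BE]
  · rw [St_ll_dn n m 0 (2*m) (2*m-1) s t (by omega) (by omega), cpl_3o m 0 (2*m-1) t s (by omega) (by omega) (by omega)] <;> simp [BE]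
  · rw [St_ll_diag_raw n m 0 (2*m) s t (by omega) (by omega)] <;> simp [BE]
  · rw [St_ll_far n m 0 (2*m) (2*m+1) s t (by omega)] <;> simp [BE]
  · rw [St_lr_diag_raw n m 0 (2*m) s t (by omega)] <;> simp [BE]
  · rw [St_ll_far n m 0 (2*m+1) (2*m-1) s t (by omega)] <;> simp [BE]
  · rw [St_ll_far n m 0 (2*m+1) (2*m) s t (by omega)] <;> simp [BE]
  · rw [St_ll_far n m 0 (2*m+1) (2*m+1) s t (by omega)] <;> simp [BE]
  · rw [St_lr_off n m 0 (2*m+1) (2*m) s t (by omega)] <;> simp [BE]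
  · rw [St_rl_off n m 0 (2*m) (2*m-1) s t (by omega)] <;> simp [BE]
  · rw [St_rl_diag_raw n m 0 (2*m) s t (by omega)] <;> simp [BE]
  · rw [St_rl_off n m 0 (2*m) (2*m+1) s t (by omega)] <;> simp [BE]
  · rw [St_rr] <;> simp [BE]

theorem pullTE_tf (n m : ℕ) (h : 2*m ≤ n) (hm : 0 < m) (hn : ¬(2*m+1 ≤ n)) :
    ∀ a b : JW, St n (m+1) 0 (phiE n m a) (phiE n m b) = (TE true false) a b := by
  intro a b
  obtain ⟨q, s⟩ := a; obtain ⟨r, t⟩ := b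
  fin_cases q <;> fin_cases r <;> simp only [phiE, if_neg (show ¬m = 0 by omega)]
  · rw [St_ll_diag_raw n (m+1) 0 (2*m-1) s t (by omega) (by omega)] <;> simp [TE]
  · rw [St_ll_up n (m+1) 0 (2*m-1) (2*m) s t (by omega) (by omega), cpl_2o (m+1) 0 (2*m-1) s t (by omega) (by omega) (by omega)] <;> simp [TE]
  · rw [St_ll_far n (m+1) 0 (2*m-1) (2*m+1) s t (by omega)] <;> simp [TE]
  · rw [St_lr_off n (m+1) 0 (2*m-1) (2*m) s t (by omega)] <;> simp [TE]
  · rw [St_ll_dn n (m+1) 0 (2*m) (2*m-1) s t (by omega) (by omega), cpl_2o (m+1) 0 (2*m-1) t s (by omega) (by omega) (by omega)] <;> simp [TE]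
  · rw [St_ll_diag_done n (m+1) 0 (2*m) s t (by omega) (by omega)] <;> simp [TE]
  · rw [St_ll_far n (m+1) 0 (2*m) (2*m+1) s t (by omega)] <;> simp [TE]
  · rw [St_lr_diag_done n (m+1) 0 (2*m) s t (by omega)] <;> simp [TE]
  · rw [St_ll_far n (m+1) 0 (2*m+1) (2*m-1) s t (by omega)] <;> simp [TE]
  · rw [St_ll_far n (m+1) 0 (2*m+1) (2*m) s t (by omega)] <;> simp [TE]
  · rw [St_ll_far n (m+1) 0 (2*m+1) (2*m+1) s t (by omega)] <;> simp [TE]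
  · rw [St_lr_off n (m+1) 0 (2*m+1) (2*m) s t (by omega)] <;> simp [TE]
  · rw [St_rl_off n (m+1) 0 (2*m) (2*m-1) s t (by omega)] <;> simp [TE]
  · rw [St_rl_diag_done n (m+1) 0 (2*m) s t (by omega)] <;> simp [TE]
  · rw [St_rl_off n (m+1) 0 (2*m) (2*m+1) s t (by omega)] <;> simp [TE]
  · rw [St_rr] <;> simp [TE]

theorem pullE_ft (n m : ℕ) (h : 2*m ≤ n) (hm : m = 0) (hn : 2*m+1 ≤ n) :
    ∀ a b : JW, St n m 0 (phiE n m a) (phiE n m b) = (BE false true) a b := by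
  intro a b
  obtain ⟨q, s⟩ := a; obtain ⟨r, t⟩ := b
  fin_cases q <;> fin_cases r <;> simp only [phiE, if_pos (show m = 0 by omega)]
  · rw [St_ll_far n m 0 (n+5) (n+5) s t (by omega)] <;> simp [BE]
  · rw [St_ll_far n m 0 (n+5) (2*m) s t (by omega)] <;> simp [BE]
  · rw [St_ll_far n m 0 (n+5) (2*m+1) s t (by omega)] <;> simp [BE]
  · rw [St_lr_off n m 0 (n+5) (2*m) s t (by omega)] <;> simp [BE]
  · rw [St_ll_far n m 0 (2*m) (n+5) s t (by omega)] <;> simp [BE]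
  · rw [St_ll_diag_raw n m 0 (2*m) s t (by omega) (by omega)] <;> simp [BE]
  · rw [St_ll_up n m 0 (2*m) (2*m+1) s t (by omega) (by omega), cpl_3e m 0 (2*m) s t (by omega) (by omega) (by omega)] <;> simp [BE]
  · rw [St_lr_diag_raw n m 0 (2*m) s t (by omega)] <;> simp [BE]
  · rw [St_ll_far n m 0 (2*m+1) (n+5) s t (by omega)] <;> simp [BE]
  · rw [St_ll_dn n m 0 (2*m+1) (2*m) s t (by omega) (by omega), cpl_3e m 0 (2*m) t s (by omega) (by omega) (by omega)] <;> simp [BE]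
  · rw [St_ll_diag_raw n m 0 (2*m+1) s t (by omega) (by omega)] <;> simp [BE]
  · rw [St_lr_off n m 0 (2*m+1) (2*m) s t (by omega)] <;> simp [BE]
  · rw [St_rl_off n m 0 (2*m) (n+5) s t (by omega)] <;> simp [BE]
  · rw [St_rl_diag_raw n m 0 (2*m) s t (by omega)] <;> simp [BE]
  · rw [St_rl_off n m 0 (2*m) (2*m+1) s t (by omega)] <;> simp [BE]
  · rw [St_rr] <;> simp [BE]

theorem pullTE_ft (n m : ℕ) (h : 2*m ≤ n) (hm : m = 0) (hn : 2*m+1 ≤ n) :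
    ∀ a b : JW, St n (m+1) 0 (phiE n m a) (phiE n m b) = (TE false true) a b := by
  intro a b
  obtain ⟨q, s⟩ := a; obtain ⟨r, t⟩ := b
  fin_cases q <;> fin_cases r <;> simp only [phiE, if_pos (show m = 0 by omega)]
  · rw [St_ll_far n (m+1) 0 (n+5) (n+5) s t (by omega)] <;> simp [TE]
  · rw [St_ll_far n (m+1) 0 (n+5) (2*m) s t (by omega)] <;> simp [TE]
  · rw [St_ll_far n (m+1) 0 (n+5) (2*m+1) s t (by omega)] <;> simp [TE]
  · rw [St_lr_off n (m+1) 0 (n+5) (2*m) s t (by omega)] <;> simp [TE]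
  · rw [St_ll_far n (m+1) 0 (2*m) (n+5) s t (by omega)] <;> simp [TE]
  · rw [St_ll_diag_done n (m+1) 0 (2*m) s t (by omega) (by omega)] <;> simp [TE]
  · rw [St_ll_up n (m+1) 0 (2*m) (2*m+1) s t (by omega) (by omega), cpl_2e (m+1) 0 (2*m) s t (by omega) (by omega) (by omega)] <;> simp [TE]
  · rw [St_lr_diag_done n (m+1) 0 (2*m) s t (by omega)] <;> simp [TE]
  · rw [St_ll_far n (m+1) 0 (2*m+1) (n+5) s t (by omega)] <;> simp [TE]
  · rw [St_ll_dn n (m+1) 0 (2*m+1) (2*m) s t (by omega) (by omega), cpl_2e (m+1) 0 (2*m) t s (by omega) (by omega) (by omega)] <;> simp [TE]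
  · rw [St_ll_diag_raw n (m+1) 0 (2*m+1) s t (by omega) (by omega)] <;> simp [TE]
  · rw [St_lr_off n (m+1) 0 (2*m+1) (2*m) s t (by omega)] <;> simp [TE]
  · rw [St_rl_off n (m+1) 0 (2*m) (n+5) s t (by omega)] <;> simp [TE]
  · rw [St_rl_diag_done n (m+1) 0 (2*m) s t (by omega)] <;> simp [TE]
  · rw [St_rl_off n (m+1) 0 (2*m) (2*m+1) s t (by omega)] <;> simp [TE]
  · rw [St_rr] <;> simp [TE]

theorem pullE_ff (n m : ℕ) (h : 2*m ≤ n) (hm : m = 0) (hn : ¬(2*m+1 ≤ n)) :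
    ∀ a b : JW, St n m 0 (phiE n m a) (phiE n m b) = (BE false false) a b := by
  intro a b
  obtain ⟨q, s⟩ := a; obtain ⟨r, t⟩ := b
  fin_cases q <;> fin_cases r <;> simp only [phiE, if_pos (show m = 0 by omega)]
  · rw [St_ll_far n m 0 (n+5) (n+5) s t (by omega)] <;> simp [BE]
  · rw [St_ll_far n m 0 (n+5) (2*m) s t (by omega)] <;> simp [BE]
  · rw [St_ll_far n m 0 (n+5) (2*m+1) s t (by omega)] <;> simp [BE]
  · rw [St_lr_off n m 0 (n+5) (2*m) s t (by omega)] <;> simp [BE]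
  · rw [St_ll_far n m 0 (2*m) (n+5) s t (by omega)] <;> simp [BE]
  · rw [St_ll_diag_raw n m 0 (2*m) s t (by omega) (by omega)] <;> simp [BE]
  · rw [St_ll_far n m 0 (2*m) (2*m+1) s t (by omega)] <;> simp [BE]
  · rw [St_lr_diag_raw n m 0 (2*m) s t (by omega)] <;> simp [BE]
  · rw [St_ll_far n m 0 (2*m+1) (n+5) s t (by omega)] <;> simp [BE]
  · rw [St_ll_far n m 0 (2*m+1) (2*m) s t (by omega)] <;> simp [BE]
  · rw [St_ll_far n m 0 (2*m+1) (2*m+1) s t (by omega)] <;> simp [BE]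
  · rw [St_lr_off n m 0 (2*m+1) (2*m) s t (by omega)] <;> simp [BE]
  · rw [St_rl_off n m 0 (2*m) (n+5) s t (by omega)] <;> simp [BE]
  · rw [St_rl_diag_raw n m 0 (2*m) s t (by omega)] <;> simp [BE]
  · rw [St_rl_off n m 0 (2*m) (2*m+1) s t (by omega)] <;> simp [BE]
  · rw [St_rr] <;> simp [BE]

theorem pullTE_ff (n m : ℕ) (h : 2*m ≤ n) (hm : m = 0) (hn : ¬(2*m+1 ≤ n)) :
    ∀ a b : JW, St n (m+1) 0 (phiE n m a) (phiE n m b) = (TE false false) a b := by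
  intro a b
  obtain ⟨q, s⟩ := a; obtain ⟨r, t⟩ := b
  fin_cases q <;> fin_cases r <;> simp only [phiE, if_pos (show m = 0 by omega)]
  · rw [St_ll_far n (m+1) 0 (n+5) (n+5) s t (by omega)] <;> simp [TE]
  · rw [St_ll_far n (m+1) 0 (n+5) (2*m) s t (by omega)] <;> simp [TE]
  · rw [St_ll_far n (m+1) 0 (n+5) (2*m+1) s t (by omega)] <;> simp [TE]
  · rw [St_lr_off n (m+1) 0 (n+5) (2*m) s t (by omega)] <;> simp [TE]
  · rw [St_ll_far n (m+1) 0 (2*m) (n+5) s t (by omega)] <;> simp [TE]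
  · rw [St_ll_diag_done n (m+1) 0 (2*m) s t (by omega) (by omega)] <;> simp [TE]
  · rw [St_ll_far n (m+1) 0 (2*m) (2*m+1) s t (by omega)] <;> simp [TE]
  · rw [St_lr_diag_done n (m+1) 0 (2*m) s t (by omega)] <;> simp [TE]
  · rw [St_ll_far n (m+1) 0 (2*m+1) (n+5) s t (by omega)] <;> simp [TE]
  · rw [St_ll_far n (m+1) 0 (2*m+1) (2*m) s t (by omega)] <;> simp [TE]
  · rw [St_ll_far n (m+1) 0 (2*m+1) (2*m+1) s t (by omega)] <;> simp [TE]
  · rw [St_lr_off n (m+1) 0 (2*m+1) (2*m) s t (by omega)] <;> simp [TE]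
  · rw [St_rl_off n (m+1) 0 (2*m) (n+5) s t (by omega)] <;> simp [TE]
  · rw [St_rl_diag_done n (m+1) 0 (2*m) s t (by omega)] <;> simp [TE]
  · rw [St_rl_off n (m+1) 0 (2*m) (2*m+1) s t (by omega)] <;> simp [TE]
  · rw [St_rr] <;> simp [TE]

theorem pullO_t (n m : ℕ) (h : 2*m+1 ≤ n) (hn : 2*m+2 ≤ n) :
    ∀ a b : JW, St n (n/2+1) m (phiO m a) (phiO m b) = (BO true) a b := by
  intro a b
  obtain ⟨q, s⟩ := a; obtain ⟨r, t⟩ := b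
  fin_cases q <;> fin_cases r <;> simp only [phiO]
  · rw [St_ll_diag_done n (n/2+1) m (2*m) s t (by omega) (by omega)] <;> simp [BO]
  · rw [St_ll_up n (n/2+1) m (2*m) (2*m+1) s t (by omega) (by omega), cpl_2e (n/2+1) m (2*m) s t (by omega) (by omega) (by omega)] <;> simp [BO]
  · rw [St_ll_far n (n/2+1) m (2*m) (2*m+2) s t (by omega)] <;> simp [BO]
  · rw [St_lr_off n (n/2+1) m (2*m) (2*m+1) s t (by omega)] <;> simp [BO]
  · rw [St_ll_dn n (n/2+1) m (2*m+1) (2*m) s t (by omega) (by omega), cpl_2e (n/2+1) m (2*m) t s (by omega) (by omega) (by omega)] <;> simp [BO]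
  · rw [St_ll_diag_raw n (n/2+1) m (2*m+1) s t (by omega) (by omega)] <;> simp [BO]
  · rw [St_ll_up n (n/2+1) m (2*m+1) (2*m+2) s t (by omega) (by omega), cpl_2o (n/2+1) m (2*m+1) s t (by omega) (by omega) (by omega)] <;> simp [BO]
  · rw [St_lr_diag_raw n (n/2+1) m (2*m+1) s t (by omega)] <;> simp [BO]
  · rw [St_ll_far n (n/2+1) m (2*m+2) (2*m) s t (by omega)] <;> simp [BO]
  · rw [St_ll_dn n (n/2+1) m (2*m+2) (2*m+1) s t (by omega) (by omega), cpl_2o (n/2+1) m (2*m+1) t s (by omega) (by omega) (by omega)] <;> simp [BO]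
  · rw [St_ll_diag_done n (n/2+1) m (2*m+2) s t (by omega) (by omega)] <;> simp [BO]
  · rw [St_lr_off n (n/2+1) m (2*m+2) (2*m+1) s t (by omega)] <;> simp [BO]
  · rw [St_rl_off n (n/2+1) m (2*m+1) (2*m) s t (by omega)] <;> simp [BO]
  · rw [St_rl_diag_raw n (n/2+1) m (2*m+1) s t (by omega)] <;> simp [BO]
  · rw [St_rl_off n (n/2+1) m (2*m+1) (2*m+2) s t (by omega)] <;> simp [BO]
  · rw [St_rr] <;> simp [BO]

theorem pullTO_t (n m : ℕ) (h : 2*m+1 ≤ n) (hn : 2*m+2 ≤ n) :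
    ∀ a b : JW, St n (n/2+1) (m+1) (phiO m a) (phiO m b) = (TO true) a b := by
  intro a b
  obtain ⟨q, s⟩ := a; obtain ⟨r, t⟩ := b
  fin_cases q <;> fin_cases r <;> simp only [phiO]
  · rw [St_ll_diag_done n (n/2+1) (m+1) (2*m) s t (by omega) (by omega)] <;> simp [TO]
  · rw [St_ll_up n (n/2+1) (m+1) (2*m) (2*m+1) s t (by omega) (by omega), cpl_1e (n/2+1) (m+1) (2*m) s t (by omega) (by omega)] <;> simp [TO]
  · rw [St_ll_far n (n/2+1) (m+1) (2*m) (2*m+2) s t (by omega)] <;> simp [TO]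
  · rw [St_lr_off n (n/2+1) (m+1) (2*m) (2*m+1) s t (by omega)] <;> simp [TO]
  · rw [St_ll_dn n (n/2+1) (m+1) (2*m+1) (2*m) s t (by omega) (by omega), cpl_1e (n/2+1) (m+1) (2*m) t s (by omega) (by omega)] <;> simp [TO]
  · rw [St_ll_diag_done n (n/2+1) (m+1) (2*m+1) s t (by omega) (by omega)] <;> simp [TO]
  · rw [St_ll_up n (n/2+1) (m+1) (2*m+1) (2*m+2) s t (by omega) (by omega), cpl_1o (n/2+1) (m+1) (2*m+1) s t (by omega) (by omega)] <;> simp [TO]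
  · rw [St_lr_diag_done n (n/2+1) (m+1) (2*m+1) s t (by omega)] <;> simp [TO]
  · rw [St_ll_far n (n/2+1) (m+1) (2*m+2) (2*m) s t (by omega)] <;> simp [TO]
  · rw [St_ll_dn n (n/2+1) (m+1) (2*m+2) (2*m+1) s t (by omega) (by omega), cpl_1o (n/2+1) (m+1) (2*m+1) t s (by omega) (by omega)] <;> simp [TO]
  · rw [St_ll_diag_done n (n/2+1) (m+1) (2*m+2) s t (by omega) (by omega)] <;> simp [TO]
  · rw [St_lr_off n (n/2+1) (m+1) (2*m+2) (2*m+1) s t (by omega)] <;> simp [TO]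
  · rw [St_rl_off n (n/2+1) (m+1) (2*m+1) (2*m) s t (by omega)] <;> simp [TO]
  · rw [St_rl_diag_done n (n/2+1) (m+1) (2*m+1) s t (by omega)] <;> simp [TO]
  · rw [St_rl_off n (n/2+1) (m+1) (2*m+1) (2*m+2) s t (by omega)] <;> simp [TO]
  · rw [St_rr] <;> simp [TO]

theorem pullO_f (n m : ℕ) (h : 2*m+1 ≤ n) (hn : ¬(2*m+2 ≤ n)) :
    ∀ a b : JW, St n (n/2+1) m (phiO m a) (phiO m b) = (BO false) a b := by
  intro a b
  obtain ⟨q, s⟩ := a; obtain ⟨r, t⟩ := b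
  fin_cases q <;> fin_cases r <;> simp only [phiO]
  · rw [St_ll_diag_done n (n/2+1) m (2*m) s t (by omega) (by omega)] <;> simp [BO]
  · rw [St_ll_up n (n/2+1) m (2*m) (2*m+1) s t (by omega) (by omega), cpl_2e (n/2+1) m (2*m) s t (by omega) (by omega) (by omega)] <;> simp [BO]
  · rw [St_ll_far n (n/2+1) m (2*m) (2*m+2) s t (by omega)] <;> simp [BO]
  · rw [St_lr_off n (n/2+1) m (2*m) (2*m+1) s t (by omega)] <;> simp [BO]
  · rw [St_ll_dn n (n/2+1) m (2*m+1) (2*m) s t (by omega) (by omega), cpl_2e (n/2+1) m (2*m) t s (by omega) (by omega) (by omega)] <;> simp [BO]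
  · rw [St_ll_diag_raw n (n/2+1) m (2*m+1) s t (by omega) (by omega)] <;> simp [BO]
  · rw [St_ll_far n (n/2+1) m (2*m+1) (2*m+2) s t (by omega)] <;> simp [BO]
  · rw [St_lr_diag_raw n (n/2+1) m (2*m+1) s t (by omega)] <;> simp [BO]
  · rw [St_ll_far n (n/2+1) m (2*m+2) (2*m) s t (by omega)] <;> simp [BO]
  · rw [St_ll_far n (n/2+1) m (2*m+2) (2*m+1) s t (by omega)] <;> simp [BO]
  · rw [St_ll_far n (n/2+1) m (2*m+2) (2*m+2) s t (by omega)] <;> simp [BO]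
  · rw [St_lr_off n (n/2+1) m (2*m+2) (2*m+1) s t (by omega)] <;> simp [BO]
  · rw [St_rl_off n (n/2+1) m (2*m+1) (2*m) s t (by omega)] <;> simp [BO]
  · rw [St_rl_diag_raw n (n/2+1) m (2*m+1) s t (by omega)] <;> simp [BO]
  · rw [St_rl_off n (n/2+1) m (2*m+1) (2*m+2) s t (by omega)] <;> simp [BO]
  · rw [St_rr] <;> simp [BO]

theorem pullTO_f (n m : ℕ) (h : 2*m+1 ≤ n) (hn : ¬(2*m+2 ≤ n)) :
    ∀ a b : JW, St n (n/2+1) (m+1) (phiO m a) (phiO m b) = (TO false) a b := by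
  intro a b
  obtain ⟨q, s⟩ := a; obtain ⟨r, t⟩ := b
  fin_cases q <;> fin_cases r <;> simp only [phiO]
  · rw [St_ll_diag_done n (n/2+1) (m+1) (2*m) s t (by omega) (by omega)] <;> simp [TO]
  · rw [St_ll_up n (n/2+1) (m+1) (2*m) (2*m+1) s t (by omega) (by omega), cpl_1e (n/2+1) (m+1) (2*m) s t (by omega) (by omega)] <;> simp [TO]
  · rw [St_ll_far n (n/2+1) (m+1) (2*m) (2*m+2) s t (by omega)] <;> simp [TO]
  · rw [St_lr_off n (n/2+1) (m+1) (2*m) (2*m+1) s t (by omega)] <;> simp [TO]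
  · rw [St_ll_dn n (n/2+1) (m+1) (2*m+1) (2*m) s t (by omega) (by omega), cpl_1e (n/2+1) (m+1) (2*m) t s (by omega) (by omega)] <;> simp [TO]
  · rw [St_ll_diag_done n (n/2+1) (m+1) (2*m+1) s t (by omega) (by omega)] <;> simp [TO]
  · rw [St_ll_far n (n/2+1) (m+1) (2*m+1) (2*m+2) s t (by omega)] <;> simp [TO]
  · rw [St_lr_diag_done n (n/2+1) (m+1) (2*m+1) s t (by omega)] <;> simp [TO]
  · rw [St_ll_far n (n/2+1) (m+1) (2*m+2) (2*m) s t (by omega)] <;> simp [TO]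
  · rw [St_ll_far n (n/2+1) (m+1) (2*m+2) (2*m+1) s t (by omega)] <;> simp [TO]
  · rw [St_ll_far n (n/2+1) (m+1) (2*m+2) (2*m+2) s t (by omega)] <;> simp [TO]
  · rw [St_lr_off n (n/2+1) (m+1) (2*m+2) (2*m+1) s t (by omega)] <;> simp [TO]
  · rw [St_rl_off n (n/2+1) (m+1) (2*m+1) (2*m) s t (by omega)] <;> simp [TO]
  · rw [St_rl_diag_done n (n/2+1) (m+1) (2*m+1) s t (by omega)] <;> simp [TO]
  · rw [St_rl_off n (n/2+1) (m+1) (2*m+1) (2*m+2) s t (by omega)] <;> simp [TO]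
  · rw [St_rr] <;> simp [TO]

-- ===== windows =====

def WE (m : ℕ) : Set FI := fun z =>
  match z with
  | .inl (l, _) => 2*m - 1 ≤ l ∧ l ≤ 2*m + 1
  | .inr (l, _) => l = 2*m

def WO (m : ℕ) : Set FI := fun z =>
  match z with
  | .inl (l, _) => 2*m ≤ l ∧ l ≤ 2*m + 2
  | .inr (l, _) => l = 2*m + 1

theorem covE (n m : ℕ) (z : FI) (hz : z ∈ WE m) : ∃ a, phiE n m a = z := by
  rcases z with ⟨l, s⟩ | ⟨l, s⟩
  · obtain ⟨h1, h2⟩ := hz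
    by_cases e1 : l = 2*m
    · exact ⟨(1, s), by simp [phiE, e1]⟩
    · by_cases e2 : l = 2*m + 1
      · exact ⟨(2, s), by simp [phiE, e2]⟩
      · refine ⟨(0, s), ?_⟩
        have hm : ¬ m = 0 := by omega
        simp only [phiE, if_neg hm]
        have : 2*m - 1 = l := by omega
        rw [this]
  · exact ⟨(3, s), by simp only [phiE]; exact congrArg _ (by rw [hz])⟩

theorem covO (m : ℕ) (z : FI) (hz : z ∈ WO m) : ∃ a, phiO m a = z := by
  rcases z with ⟨l, s⟩ | ⟨l, s⟩
  · obtain ⟨h1, h2⟩ := hz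
    by_cases e1 : l = 2*m
    · exact ⟨(0, s), by simp [phiO, e1]⟩
    · by_cases e2 : l = 2*m + 1
      · exact ⟨(1, s), by simp [phiO, e2]⟩
      · refine ⟨(2, s), ?_⟩
        simp only [phiO]
        have : 2*m + 2 = l := by omega
        rw [this]
  · exact ⟨(3, s), by simp only [phiO]; exact congrArg _ (by rw [hz])⟩

theorem rowE (n m : ℕ) (e o : ℕ) (t : Fin 3) (z : FI) (hz : z ∉ WE m) :
    St n e o (.inl (2*m, t)) z = 0 ∧ St n e o z (.inl (2*m, t)) = 0 := by
  rcases z with ⟨l, s⟩ | ⟨l, s⟩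
  · have hl : ¬(2*m - 1 ≤ l ∧ l ≤ 2*m + 1) := hz
    constructor
    · exact St_ll_far n e o (2*m) l t s (by omega)
    · exact St_ll_far n e o l (2*m) s t (by omega)
  · have hl : ¬(l = 2*m) := hz
    exact ⟨St_lr_off n e o (2*m) l t s (by omega), St_rl_off n e o l (2*m) s t (by omega)⟩

theorem rowO (n m : ℕ) (e o : ℕ) (t : Fin 3) (z : FI) (hz : z ∉ WO m) :
    St n e o (.inl (2*m+1, t)) z = 0 ∧ St n e o z (.inl (2*m+1, t)) = 0 := by
  rcases z with ⟨l, s⟩ | ⟨l, s⟩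
  · have hl : ¬(2*m ≤ l ∧ l ≤ 2*m + 2) := hz
    constructor
    · exact St_ll_far n e o (2*m+1) l t s (by omega)
    · exact St_ll_far n e o l (2*m+1) s t (by omega)
  · have hl : ¬(l = 2*m+1) := hz
    exact ⟨St_lr_off n e o (2*m+1) l t s (by omega), St_rl_off n e o l (2*m+1) s t (by omega)⟩

theorem stabE (n m : ℕ) (x y : FI) (hxy : x ∉ WE m ∨ y ∉ WE m) :
    St n (m+1) 0 x y = St n m 0 x y := by
  have hW : ∀ (l : ℕ) (s : Fin 3), (Sum.inl (l, s) : FI) ∉ WE m → ¬(2*m - 1 ≤ l ∧ l ≤ 2*m + 1) :=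
    fun l s h => h
  have hWr : ∀ (l : ℕ) (s : Fin 3), (Sum.inr (l, s) : FI) ∉ WE m → l ≠ 2*m :=
    fun l s h => h
  rcases x with ⟨l, s⟩ | ⟨l, s⟩ <;> rcases y with ⟨k, t⟩ | ⟨k, t⟩
  · -- inl inl
    have hc : ¬(2*m - 1 ≤ l ∧ l ≤ 2*m + 1) ∨ ¬(2*m - 1 ≤ k ∧ k ≤ 2*m + 1) := by
      rcases hxy with h | h
      · exact Or.inl (hW _ _ h)
      · exact Or.inr (hW _ _ h)
    by_cases hlk : l = k
    · subst hlk
      by_cases hn : l ≤ n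
      · by_cases hd : l % 2 = 0 ∧ l < 2*(m+1) ∨ l < 2*0
        · rw [St_ll_diag_done n (m+1) 0 l s t hn hd,
             St_ll_diag_done n m 0 l s t hn (by omega)]
        · rw [St_ll_diag_raw n (m+1) 0 l s t hn hd,
             St_ll_diag_raw n m 0 l s t hn (by omega)]
      · rw [St_ll_far n (m+1) 0 l l s t (by omega), St_ll_far n m 0 l l s t (by omega)]
    · by_cases hup : k = l + 1
      · by_cases hn : k ≤ n
        · rw [St_ll_up n (m+1) 0 l k s t hn hup, St_ll_up n m 0 l k s t hn hup,
             cpl_congrE 0 0 m l (by omega) rfl]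
        · rw [St_ll_far n (m+1) 0 l k s t (by omega), St_ll_far n m 0 l k s t (by omega)]
      · by_cases hdn : l = k + 1
        · by_cases hn : l ≤ n
          · rw [St_ll_dn n (m+1) 0 l k s t hn hdn, St_ll_dn n m 0 l k s t hn hdn,
               cpl_congrE 0 0 m k (by omega) rfl]
          · rw [St_ll_far n (m+1) 0 l k s t (by omega), St_ll_far n m 0 l k s t (by omega)]
        · rw [St_ll_far n (m+1) 0 l k s t (by omega), St_ll_far n m 0 l k s t (by omega)]
  · -- inl inr
    have hc : ¬(2*m - 1 ≤ l ∧ l ≤ 2*m + 1) ∨ k ≠ 2*m := by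
      rcases hxy with h | h
      · exact Or.inl (hW _ _ h)
      · exact Or.inr (hWr _ _ h)
    by_cases hlk : l = k
    · subst hlk
      by_cases hd : l ≤ n ∧ (l % 2 = 0 ∧ l < 2*(m+1) ∨ l < 2*0)
      · rw [St_lr_diag_done n (m+1) 0 l s t hd, St_lr_diag_done n m 0 l s t (by omega)]
      · rw [St_lr_diag_raw n (m+1) 0 l s t hd, St_lr_diag_raw n m 0 l s t (by omega)]
    · rw [St_lr_off n (m+1) 0 l k s t hlk, St_lr_off n m 0 l k s t hlk]
  · -- inr inl
    have hc : l ≠ 2*m ∨ ¬(2*m - 1 ≤ k ∧ k ≤ 2*m + 1) := by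
      rcases hxy with h | h
      · exact Or.inl (hWr _ _ h)
      · exact Or.inr (hW _ _ h)
    by_cases hlk : l = k
    · subst hlk
      by_cases hd : l ≤ n ∧ (l % 2 = 0 ∧ l < 2*(m+1) ∨ l < 2*0)
      · rw [St_rl_diag_done n (m+1) 0 l s t hd, St_rl_diag_done n m 0 l s t (by omega)]
      · rw [St_rl_diag_raw n (m+1) 0 l s t hd, St_rl_diag_raw n m 0 l s t (by omega)]
    · rw [St_rl_off n (m+1) 0 l k s t hlk, St_rl_off n m 0 l k s t hlk]
  · rfl

theorem stabO (n m : ℕ) (x y : FI) (hxy : x ∉ WO m ∨ y ∉ WO m) :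
    St n (n/2+1) (m+1) x y = St n (n/2+1) m x y := by
  have hW : ∀ (l : ℕ) (s : Fin 3), (Sum.inl (l, s) : FI) ∉ WO m → ¬(2*m ≤ l ∧ l ≤ 2*m + 2) :=
    fun l s h => h
  have hWr : ∀ (l : ℕ) (s : Fin 3), (Sum.inr (l, s) : FI) ∉ WO m → l ≠ 2*m+1 :=
    fun l s h => h
  rcases x with ⟨l, s⟩ | ⟨l, s⟩ <;> rcases y with ⟨k, t⟩ | ⟨k, t⟩
  · have hc : ¬(2*m ≤ l ∧ l ≤ 2*m + 2) ∨ ¬(2*m ≤ k ∧ k ≤ 2*m + 2) := by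
      rcases hxy with h | h
      · exact Or.inl (hW _ _ h)
      · exact Or.inr (hW _ _ h)
    by_cases hlk : l = k
    · subst hlk
      by_cases hn : l ≤ n
      · by_cases hd : l % 2 = 0 ∧ l < 2*(n/2+1) ∨ l < 2*(m+1)
        · rw [St_ll_diag_done n (n/2+1) (m+1) l s t hn hd,
             St_ll_diag_done n (n/2+1) m l s t hn (by omega)]
        · rw [St_ll_diag_raw n (n/2+1) (m+1) l s t hn hd,
             St_ll_diag_raw n (n/2+1) m l s t hn (by omega)]
      · rw [St_ll_far n (n/2+1) (m+1) l l s t (by omega), St_ll_far n (n/2+1) m l l s t (by omega)]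
    · by_cases hup : k = l + 1
      · by_cases hn : k ≤ n
        · rw [St_ll_up n (n/2+1) (m+1) l k s t hn hup, St_ll_up n (n/2+1) m l k s t hn hup,
             cpl_congrO (n/2+1) m l (by omega)]
        · rw [St_ll_far n (n/2+1) (m+1) l k s t (by omega), St_ll_far n (n/2+1) m l k s t (by omega)]
      · by_cases hdn : l = k + 1
        · by_cases hn : l ≤ n
          · rw [St_ll_dn n (n/2+1) (m+1) l k s t hn hdn, St_ll_dn n (n/2+1) m l k s t hn hdn,
               cpl_congrO (n/2+1) m k (by omega)]
          · rw [St_ll_far n (n/2+1) (m+1) l k s t (by omega), St_ll_far n (n/2+1) m l k s t (by omega)]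
        · rw [St_ll_far n (n/2+1) (m+1) l k s t (by omega), St_ll_far n (n/2+1) m l k s t (by omega)]
  · have hc : ¬(2*m ≤ l ∧ l ≤ 2*m + 2) ∨ k ≠ 2*m+1 := by
      rcases hxy with h | h
      · exact Or.inl (hW _ _ h)
      · exact Or.inr (hWr _ _ h)
    by_cases hlk : l = k
    · subst hlk
      by_cases hd : l ≤ n ∧ (l % 2 = 0 ∧ l < 2*(n/2+1) ∨ l < 2*(m+1))
      · rw [St_lr_diag_done n (n/2+1) (m+1) l s t hd, St_lr_diag_done n (n/2+1) m l s t (by omega)]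
      · rw [St_lr_diag_raw n (n/2+1) (m+1) l s t hd, St_lr_diag_raw n (n/2+1) m l s t (by omega)]
    · rw [St_lr_off n (n/2+1) (m+1) l k s t hlk, St_lr_off n (n/2+1) m l k s t hlk]
  · have hc : l ≠ 2*m+1 ∨ ¬(2*m ≤ k ∧ k ≤ 2*m + 2) := by
      rcases hxy with h | h
      · exact Or.inl (hWr _ _ h)
      · exact Or.inr (hW _ _ h)
    by_cases hlk : l = k
    · subst hlk
      by_cases hd : l ≤ n ∧ (l % 2 = 0 ∧ l < 2*(n/2+1) ∨ l < 2*(m+1))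
      · rw [St_rl_diag_done n (n/2+1) (m+1) l s t hd, St_rl_diag_done n (n/2+1) m l s t (by omega)]
      · rw [St_rl_diag_raw n (n/2+1) (m+1) l s t hd, St_rl_diag_raw n (n/2+1) m l s t (by omega)]
    · rw [St_rl_off n (n/2+1) (m+1) l k s t hlk, St_rl_off n (n/2+1) m l k s t hlk]
  · rfl

-- ===== step lemmas =====

theorem even_step_core (n m : ℕ) (h : 2*m ≤ n) (lo hi : Bool)
    (hB : ∀ a b, St n m 0 (phiE n m a) (phiE n m b) = BE lo hi a b)
    (hT : ∀ a b, St n (m+1) 0 (phiE n m a) (phiE n m b) = TE lo hi a b) :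
    mutateSeq (St n m 0) ((sL (2*m)).map Sum.inl) = St n (m+1) 0 := by
  have hmap : (sL (2*m)).map (Sum.inl : I3 → FI) = lw.map (phiE n m) := by
    simp [sL, lw, phiE]
  funext x y
  by_cases hW : x ∈ WE m ∧ y ∈ WE m
  · obtain ⟨a, ha⟩ := covE n m x hW.1
    obtain ⟨b, hb⟩ := covE n m y hW.2
    rw [← ha, ← hb, hmap, mutateSeq_pullback (phiE n m) (injE n m h) lw (St n m 0) a b,
      show (fun a b => St n m 0 (phiE n m a) (phiE n m b)) = BE lo hi from
        funext fun a => funext fun b => hB a b,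
      mutateSeq_eq_mutateSeqC, evenCore lo hi a b]
    exact (hT a b).symm
  · have hyp : ∀ k ∈ (sL (2*m)).map Sum.inl, k ∈ WE m ∧
        ∀ z, z ∉ WE m → St n m 0 k z = 0 ∧ St n m 0 z k = 0 := by
      intro k hk
      simp only [sL, List.map_cons, List.map_nil, List.mem_cons, List.not_mem_nil,
        or_false] at hk
      have hmem : ∀ t : Fin 3, (Sum.inl (2*m, t) : FI) ∈ WE m := fun t => ⟨by omega, by omega⟩
      rcases hk with rfl | rfl | rfl | rfl <;>
        exact ⟨hmem _, fun z hz => rowE n m m 0 _ z hz⟩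
    rw [mutateSeq_window (WE m) ((sL (2*m)).map Sum.inl) (St n m 0) hyp x y (not_and_or.mp hW)]
    exact (stabE n m x y (not_and_or.mp hW)).symm

theorem even_step (n m : ℕ) (h : 2*m ≤ n) :
    mutateSeq (St n m 0) ((sL (2*m)).map Sum.inl) = St n (m+1) 0 := by
  rcases Nat.eq_zero_or_pos m with hm | hm <;> by_cases hn : 2*m+1 ≤ n
  · exact even_step_core n m h false true (pullE_ft n m h hm hn) (pullTE_ft n m h hm hn)
  · exact even_step_core n m h false false (pullE_ff n m h hm hn) (pullTE_ff n m h hm hn)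
  · exact even_step_core n m h true true (pullE_tt n m h hm hn) (pullTE_tt n m h hm hn)
  · exact even_step_core n m h true false (pullE_tf n m h hm hn) (pullTE_tf n m h hm hn)

theorem odd_step_core (n m : ℕ) (h : 2*m+1 ≤ n) (hi : Bool)
    (hB : ∀ a b, St n (n/2+1) m (phiO m a) (phiO m b) = BO hi a b)
    (hT : ∀ a b, St n (n/2+1) (m+1) (phiO m a) (phiO m b) = TO hi a b) :
    mutateSeq (St n (n/2+1) m) ((sL (2*m+1)).map Sum.inl) = St n (n/2+1) (m+1) := by
  have hmap : (sL (2*m+1)).map (Sum.inl : I3 → FI) = lw.map (phiO m) := by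
    simp [sL, lw, phiO]
  funext x y
  by_cases hW : x ∈ WO m ∧ y ∈ WO m
  · obtain ⟨a, ha⟩ := covO m x hW.1
    obtain ⟨b, hb⟩ := covO m y hW.2
    rw [← ha, ← hb, hmap, mutateSeq_pullback (phiO m) (injO m) lw (St n (n/2+1) m) a b,
      show (fun a b => St n (n/2+1) m (phiO m a) (phiO m b)) = BO hi from
        funext fun a => funext fun b => hB a b,
      mutateSeq_eq_mutateSeqC, oddCore hi a b]
    exact (hT a b).symm
  · have hyp : ∀ k ∈ (sL (2*m+1)).map Sum.inl, k ∈ WO m ∧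
        ∀ z, z ∉ WO m → St n (n/2+1) m k z = 0 ∧ St n (n/2+1) m z k = 0 := by
      intro k hk
      simp only [sL, List.map_cons, List.map_nil, List.mem_cons, List.not_mem_nil,
        or_false] at hk
      have hmem : ∀ t : Fin 3, (Sum.inl (2*m+1, t) : FI) ∈ WO m := fun t => ⟨by omega, by omega⟩
      rcases hk with rfl | rfl | rfl | rfl <;>
        exact ⟨hmem _, fun z hz => rowO n m (n/2+1) m _ z hz⟩
    rw [mutateSeq_window (WO m) ((sL (2*m+1)).map Sum.inl) (St n (n/2+1) m) hyp x y
      (not_and_or.mp hW)]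
    exact (stabO n m x y (not_and_or.mp hW)).symm

theorem odd_step (n m : ℕ) (h : 2*m+1 ≤ n) :
    mutateSeq (St n (n/2+1) m) ((sL (2*m+1)).map Sum.inl) = St n (n/2+1) (m+1) := by
  by_cases hn : 2*m+2 ≤ n
  · exact odd_step_core n m h true (pullO_t n m h hn) (pullTO_t n m h hn)
  · exact odd_step_core n m h false (pullO_f n m h hn) (pullTO_f n m h hn)

-- ===== the quiver towers and sequences =====

theorem towerQ_diag (l : ℕ) (s t : Fin 3) : towerQ (l,s) (l,t) = cyc3 s t := by
  fin_cases s <;> fin_cases t <;> simp [towerQ, cyc3]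

theorem towerQ_up (l : ℕ) (s t : Fin 3) : towerQ (l,s) (l+1,t) = cpl 0 0 l s t := by
  by_cases hp : l % 2 = 0
  · rw [cpl_3e 0 0 l s t (by omega) (by omega) hp]
    fin_cases s <;> fin_cases t <;> simp [towerQ, id3, hp] <;> omega
  · rw [cpl_3o 0 0 l s t (by omega) (by omega) (by omega)]
    fin_cases s <;> fin_cases t <;> simp [towerQ, id3, hp] <;> omega

theorem towerQ_dn (l : ℕ) (s t : Fin 3) : towerQ (l+1,s) (l,t) = -cpl 0 0 l t s := by
  by_cases hp : l % 2 = 0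
  · rw [cpl_3e 0 0 l t s (by omega) (by omega) hp]
    fin_cases s <;> fin_cases t <;> simp [towerQ, id3, hp] <;> omega
  · rw [cpl_3o 0 0 l t s (by omega) (by omega) (by omega)]
    fin_cases s <;> fin_cases t <;> simp [towerQ, id3, hp] <;> omega

theorem towerQ_far (l k : ℕ) (h : l ≠ k ∧ k ≠ l + 1 ∧ l ≠ k + 1) (s t : Fin 3) :
    towerQ (l,s) (k,t) = 0 := by
  unfold towerQ
  rw [if_neg (by rintro ⟨h1, -⟩; omega), if_neg (by rintro ⟨h1, -⟩; omega),
    if_neg (by rintro ⟨h1, -⟩; omega), if_neg (by rintro ⟨h1, -⟩; omega)]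

theorem St_init (n : ℕ) : framed (restrictQ towerQ {x : I3 | x.1 ≤ n}) = St n 0 0 := by
  funext x y
  rcases x with ⟨l, s⟩ | ⟨l, s⟩ <;> rcases y with ⟨k, t⟩ | ⟨k, t⟩
  · show restrictQ towerQ {x : I3 | x.1 ≤ n} (l,s) (k,t) = _
    by_cases hg : l ≤ n ∧ k ≤ n
    · rw [show restrictQ towerQ {x : I3 | x.1 ≤ n} (l,s) (k,t) = towerQ (l,s) (k,t) from
        if_pos ⟨hg.1, hg.2⟩]
      by_cases hlk : l = k
      · subst hlk
        rw [St_ll_diag_raw n 0 0 l s t hg.1 (by omega), towerQ_diag]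
      · by_cases hup : k = l + 1
        · subst hup
          rw [St_ll_up n 0 0 l (l+1) s t hg.2 rfl, towerQ_up]
        · by_cases hdn : l = k + 1
          · subst hdn
            rw [St_ll_dn n 0 0 (k+1) k s t hg.1 rfl, towerQ_dn]
          · rw [St_ll_far n 0 0 l k s t (by omega), towerQ_far l k (by omega)]
    · rw [show restrictQ towerQ {x : I3 | x.1 ≤ n} (l,s) (k,t) = 0 from
        if_neg (by rintro ⟨h1, h2⟩; exact hg ⟨h1, h2⟩)]
      rw [St_ll_far n 0 0 l k s t (by omega)]
  · simp only [framed]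
    by_cases hlk : l = k
    · subst hlk
      rw [St_lr_diag_raw n 0 0 l s t (by omega)]
      by_cases hst : s = t
      · rw [if_pos (by rw [hst]), id3, if_pos hst]
      · rw [if_neg (fun hc => hst (congrArg Prod.snd hc)), id3, if_neg hst]
    · rw [St_lr_off n 0 0 l k s t hlk, if_neg (fun hc => hlk (congrArg Prod.fst hc))]
  · simp only [framed]
    by_cases hlk : l = k
    · subst hlk
      rw [St_rl_diag_raw n 0 0 l s t (by omega)]
      by_cases hst : s = t
      · rw [if_pos (by rw [hst]), id3, if_pos (hst ▸ rfl)]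
      · rw [if_neg (fun hc => hst (congrArg Prod.snd hc)), id3, if_neg (fun hc => hst hc.symm),
          neg_zero]
    · rw [St_rl_off n 0 0 l k s t hlk, if_neg (fun hc => hlk (congrArg Prod.fst hc))]
  · rfl

-- ===== sequences and phases =====

def evL : ℕ → List I3
  | 0 => []
  | m+1 => evL m ++ sL (2*m)

def odL : ℕ → List I3
  | 0 => []
  | m+1 => odL m ++ sL (2*m+1)

def rho (n : ℕ) : List I3 := evL (n/2+1) ++ odL ((n+1)/2)

theorem ev_phase (n : ℕ) : ∀ m, 2*m ≤ n + 2 →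
    mutateSeq (St n 0 0) ((evL m).map Sum.inl) = St n m 0
  | 0, _ => rfl
  | m+1, h => by
    rw [evL, List.map_append, mutateSeq_append, ev_phase n m (by omega),
      even_step n m (by omega)]

theorem od_phase (n : ℕ) : ∀ m, 2*m ≤ n + 1 →
    mutateSeq (St n (n/2+1) 0) ((odL m).map Sum.inl) = St n (n/2+1) m
  | 0, _ => rfl
  | m+1, h => by
    rw [odL, List.map_append, mutateSeq_append, od_phase n m (by omega),
      odd_step n m (by omega)]

theorem final_le (n : ℕ) (i j : I3) (hi : i.1 ≤ n) :
    St n (n/2+1) ((n+1)/2) (.inl i) (.inr j) ≤ 0 := by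
  obtain ⟨l, s⟩ := i; obtain ⟨k, t⟩ := j
  by_cases hlk : l = k
  · subst hlk
    rw [St_lr_diag_done n (n/2+1) ((n+1)/2) l s t ⟨hi, by omega⟩]
    rw [rf3]
    split_ifs <;> norm_num
  · rw [St_lr_off n (n/2+1) ((n+1)/2) l k s t hlk]

theorem evL_mem : ∀ m (k : I3), k ∈ evL m → k.1 + 2 ≤ 2*m
  | 0, k, h => absurd h List.not_mem_nil
  | m+1, k, h => by
    rcases List.mem_append.mp h with h | h
    · have := evL_mem m k h; omega
    · simp only [sL, List.mem_cons, List.not_mem_nil, or_false] at h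
      rcases h with rfl | rfl | rfl | rfl <;> omega

theorem odL_mem : ∀ m (k : I3), k ∈ odL m → k.1 < 2*m
  | 0, k, h => absurd h List.not_mem_nil
  | m+1, k, h => by
    rcases List.mem_append.mp h with h | h
    · have := odL_mem m k h; omega
    · simp only [sL, List.mem_cons, List.not_mem_nil, or_false] at h
      rcases h with rfl | rfl | rfl | rfl <;> omega

-- ===== coherence =====

theorem filt_keep (n : ℕ) (L : List I3) (hL : ∀ k ∈ L, k.1 ≤ n) :
    L.filter (fun x => @decide (x ∈ {x : I3 | x.1 ≤ n}) (Classical.propDecidable _)) = L :=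
  List.filter_eq_self.mpr (fun a ha => @decide_eq_true _ (Classical.propDecidable _) (hL a ha))

theorem filt_drop (n k : ℕ) (h : n < k) :
    (sL k).filter (fun x => @decide (x ∈ {x : I3 | x.1 ≤ n}) (Classical.propDecidable _)) = [] := by
  apply List.filter_eq_nil_iff.mpr
  intro a ha
  simp only [sL, List.mem_cons, List.not_mem_nil, or_false] at ha
  have hna : ¬ (a ∈ {x : I3 | x.1 ≤ n}) := by
    rcases ha with rfl | rfl | rfl | rfl <;> simp only [Set.mem_setOf_eq] <;> omega
  simp [hna]

theorem coh (n : ℕ) :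
    rho n = (rho (n + 1)).filter
      (fun x => @decide (x ∈ {x : I3 | x.1 ≤ n}) (Classical.propDecidable _)) := by
  unfold rho
  rw [List.filter_append]
  rcases Nat.even_or_odd n with ⟨c, hc⟩ | ⟨c, hc⟩
  · -- n even
    conv_rhs => rw [show (n+1)/2 + 1 = n/2 + 1 by omega, show (n+1+1)/2 = (n+1)/2 + 1 by omega,
      odL, List.filter_append]
    rw [filt_keep n (evL (n/2+1)) (fun k hk => by have := evL_mem _ _ hk; omega),
      filt_keep n (odL ((n+1)/2)) (fun k hk => by have := odL_mem _ _ hk; omega),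
      show 2*((n+1)/2) + 1 = n + 1 by omega, filt_drop n (n+1) (by omega), List.append_nil]
  · -- n odd
    conv_rhs => rw [show (n+1)/2 + 1 = (n/2 + 1) + 1 by omega, show (n+1+1)/2 = (n+1)/2 by omega,
      evL, List.filter_append]
    rw [filt_keep n (evL (n/2+1)) (fun k hk => by have := evL_mem _ _ hk; omega),
      filt_keep n (odL ((n+1)/2)) (fun k hk => by have := odL_mem _ _ hk; omega),
      show 2*(n/2+1) = n + 1 by omega, filt_drop n (n+1) (by omega), List.append_nil]
theorem redOn (n : ℕ) : IsReddeningOn towerQ {x : I3 | x.1 ≤ n} (rho n) := by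
  constructor
  · intro k hk
    rcases List.mem_append.mp hk with h | h
    · have := evL_mem _ _ h
      show k.1 ≤ n
      omega
    · have := odL_mem _ _ h
      show k.1 ≤ n
      omega
  · intro i hi j hj
    have hmain : mutateSeq (framed (restrictQ towerQ {x : I3 | x.1 ≤ n}))
        ((rho n).map Sum.inl) = St n (n/2+1) ((n+1)/2) := by
      rw [St_init n]
      show mutateSeq (St n 0 0) ((evL (n/2+1) ++ odL ((n+1)/2)).map Sum.inl) = _
      rw [List.map_append, mutateSeq_append, ev_phase n (n/2+1) (by omega),
        od_phase n ((n+1)/2) (by omega)]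
    rw [hmain]
    exact final_le n i j hi


/-- The infinite triangle-tower quiver `T_∞`, the limit of the finite towers
`T_n` on the first `n+1` layers, admits an infinite reddening sequence. -/
theorem towerQ_reddening :
    InfReddening towerQ (fun n => {x : ℕ × Fin 3 | x.1 ≤ n}) := by
  exact ⟨rho, fun n => coh n, fun n => redOn n⟩
end
end
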